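/- arXiv:2306.12506 — 3 statements merged into one kernel-verified Lean document; each statement's English description precedes it below -/
import Mathlib

section
/- Let κ →^c λ →^d ν be skew-column steps of r-row generalized partitions and set μ := sort(ν + κ − λ). Let d = d_1 + d_2 with d_1, d_2 weakly of the same sign as d, let β be the |d_1|-th term of std(λ → ν) (so that λ →^{d_1} β →^{d_2} ν), and let α be the |d_1|-th term of std(κ → μ) (so that κ →^{d_1} α →^{d_2} μ). Then α = sort(β + κ − λ) and μ = sort(ν + α − β); that is, both squares of the refined diagram are local rule diagrams. -/
open scoped Classical

noncomputable section

namespace FT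

/-- A (raw) `r`-row integer vector; generalized partitions are the antitone ones. -/
abbrev GP (r : ℕ) := Fin r → ℤ

/-- The weakly decreasing rearrangement of a tuple. -/
def sortDesc {r : ℕ} (α : GP r) : GP r := fun i => (α ∘ Tuple.sort α) i.rev

/-- Standard basis vector (0-indexed). -/
def eV {r : ℕ} (a : Fin r) : GP r := fun i => if i = a then 1 else 0

/-- Standard basis vector with 1-indexed row `a` (zero if out of range). -/
def eN (r : ℕ) (a : ℕ) : GP r := fun i => if (i : ℕ) + 1 = a then 1 else 0

/-- Indicator vector of a set of rows. -/
def indV {r : ℕ} (S : Finset (Fin r)) : GP r := fun i => if i ∈ S then 1 else 0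

/-- `colStep r c μ λ`: `λ` is obtained from `μ` by adding (if `c ≥ 0`) or removing
(if `c ≤ 0`) a skew column of `|c|` boxes. -/
def colStep (r : ℕ) (c : ℤ) (μ lam : GP r) : Prop :=
  ∃ S : Finset (Fin r), S.card = c.natAbs ∧
    (if 0 ≤ c then lam = μ + indV S else lam = μ - indV S)

/-- Skew fluctuating tableau of length `n` and type `c` (recorded at indices `0,…,n`;
values of `T` and `c` beyond those indices are irrelevant). -/
def IsSkewFT (r n : ℕ) (T : ℕ → GP r) (c : ℕ → ℤ) : Prop :=
  (∀ k ≤ n, Antitone (T k)) ∧ ∀ j < n, colStep r (c j) (T j) (T (j + 1))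

/-- (Non-skew) fluctuating tableau: starts at the empty shape. -/
def IsFT (r n : ℕ) (T : ℕ → GP r) (c : ℕ → ℤ) : Prop :=
  IsSkewFT r n T c ∧ T 0 = 0

/-- Rectangular: the final shape is constant. -/
def Rect (r n : ℕ) (T : ℕ → GP r) : Prop := ∃ m : ℤ, ∀ i, T n i = m

/-- Bender–Knuth involution `BK_i` (for `1 ≤ i ≤ n-1`). -/
def BK {r : ℕ} (i : ℕ) (T : ℕ → GP r) : ℕ → GP r :=
  fun k => if k = i then sortDesc (T (i + 1) + T (i - 1) - T i) else T k

/-- `BKseg a m = BK (a+m-1) ∘ ⋯ ∘ BK a` (apply `BK a` first). -/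
def BKseg {r : ℕ} (a : ℕ) : ℕ → (ℕ → GP r) → ℕ → GP r
  | 0 => id
  | m + 1 => BK (a + m) ∘ BKseg a m

/-- Promotion `P = BK_{n-1} ∘ ⋯ ∘ BK_1` on length-`n` tableaux. -/
def promo {r : ℕ} (n : ℕ) (T : ℕ → GP r) : ℕ → GP r := BKseg 1 (n - 1) T

/-- `BKsegRev a m = BK a ∘ ⋯ ∘ BK (a+m-1)` (apply `BK (a+m-1)` first). -/
def BKsegRev {r : ℕ} (a : ℕ) : ℕ → (ℕ → GP r) → ℕ → GP r
  | 0 => id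
  | m + 1 => BKsegRev a m ∘ BK (a + m)

/-- Inverse of promotion: `P⁻¹ = BK_1 ∘ ⋯ ∘ BK_{n-1}`. -/
def promoInv {r : ℕ} (n : ℕ) (T : ℕ → GP r) : ℕ → GP r := BKsegRev 1 (n - 1) T

def evacAux {r : ℕ} : ℕ → (ℕ → GP r) → ℕ → GP r
  | 0, T => T
  | m + 1, T => evacAux m (BKseg 1 (m + 1) T)

/-- Evacuation `E = BK_1 ∘ (BK_2∘BK_1) ∘ ⋯ ∘ (BK_{n-1}∘⋯∘BK_1)`. -/
def evac {r : ℕ} (n : ℕ) (T : ℕ → GP r) : ℕ → GP r := evacAux (n - 1) T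

def devacAux {r : ℕ} (n : ℕ) : ℕ → (ℕ → GP r) → ℕ → GP r
  | 0, T => T
  | m + 1, T => BKseg (n - (m + 1)) (m + 1) (devacAux n m T)

/-- Dual evacuation `E* = (BK_{n-1}∘⋯∘BK_1) ∘ (BK_{n-1}∘⋯∘BK_2) ∘ ⋯ ∘ BK_{n-1}`. -/
def devac {r : ℕ} (n : ℕ) (T : ℕ → GP r) : ℕ → GP r := devacAux n (n - 1) T

/-- `rev(-v)`. -/
def revNeg {r : ℕ} (v : GP r) : GP r := fun i => - v i.rev

/-- Time reversal `τ`. -/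
def tauT {r : ℕ} (n : ℕ) (T : ℕ → GP r) : ℕ → GP r := fun k => T (n - k)

/-- `ϖ`. -/
def varpiT {r : ℕ} (T : ℕ → GP r) : ℕ → GP r := fun k => revNeg (T k)

/-- `ε`. -/
def epsT {r : ℕ} (n : ℕ) (T : ℕ → GP r) : ℕ → GP r := fun k => revNeg (T (n - k))

/-- Sign of the `j`-th step of `T` (paper indexing: step `j` goes from `λ^{j-1}` to `λ^j`). -/
def sgnStep {r : ℕ} (T : ℕ → GP r) (j : ℕ) : ℤ :=
  if T j = T (j - 1) then 0 else if T (j - 1) ≤ T j then 1 else -1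

/-- The switch involution `toggle_j` (paper indexing, `1 ≤ j ≤ n`). -/
def toggleT {r : ℕ} (j : ℕ) (T : ℕ → GP r) : ℕ → GP r :=
  fun m => if m < j then T m else fun i => T m i - sgnStep T j

/-- Number of boxes added/removed in the step from `T j` to `T (j+1)`. -/
def stepSize {r : ℕ} (T : ℕ → GP r) (j : ℕ) : ℕ :=
  (Finset.univ.filter fun i : Fin r => T (j + 1) i ≠ T j i).card

/-- Cumulative step sizes: position of `T j` inside the oscillization. -/
def cum {r : ℕ} (T : ℕ → GP r) (j : ℕ) : ℕ := ∑ j' ∈ Finset.range j, stepSize T j'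

/-- The `j`-th intermediate shape of the oscillization of the skew-column step `μ → λ`:
boxes are added smallest-row-first and removed largest-row-first. -/
def oscStep {r : ℕ} (μ lam : GP r) (j : ℕ) : GP r := fun i =>
  let S := Finset.univ.filter fun i' : Fin r => lam i' ≠ μ i'
  if i ∈ S ∧ (if μ i < lam i then (S.filter fun i' => i' ≤ i).card ≤ j
              else (S.filter fun i' => i ≤ i').card ≤ j)
  then lam i else μ i

/-- Largest index `j ≤ n` with `cum T j ≤ k`. -/
def stdIdx {r : ℕ} (n : ℕ) (T : ℕ → GP r) (k : ℕ) : ℕ :=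
  ((Finset.range (n + 1)).filter fun j => cum T j ≤ k).sup id

/-- The oscillization `std(T)` of a length-`n` tableau, a tableau of length `t = Σ|c_j|`. -/
def stdT {r : ℕ} (n : ℕ) (T : ℕ → GP r) : ℕ → GP r := fun k =>
  if stdIdx n T k = n then T n
  else oscStep (T (stdIdx n T k)) (T (stdIdx n T k + 1)) (k - cum T (stdIdx n T k))

/-- Rows of the promotion–evacuation growth diagram: `PE t S u` is `P^u(S)`
for a length-`t` (oscillating) tableau `S`. -/
def PE {r : ℕ} (t : ℕ) (S : ℕ → GP r) (u : ℕ) : ℕ → GP r := (promo t)^[u] S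

/-- `i ∈ {1,…,r-1}` is recorded at cell `(u,v)` of the growth diagram of `S`
(rows 1-indexed; `λ^{u,v} = P^u(S)(v-u)`). -/
def recorded (r t : ℕ) (S : ℕ → GP r) (i u v : ℕ) : Prop :=
  ∃ a b : Fin r,
    (PE t S (u - 1) (v - u) = PE t S u (v - u - 1) + eV a ∧
     PE t S (u - 1) (v - u + 1) = PE t S u (v - u) + eV b ∧
     (a : ℕ) < i ∧ i ≤ (b : ℕ))
    ∨
    (PE t S u (v - u - 1) = PE t S (u - 1) (v - u) + eV a ∧
     PE t S u (v - u) = PE t S (u - 1) (v - u + 1) + eV b ∧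
     (b : ℕ) < i ∧ i ≤ (a : ℕ))

/-- `i ∈ PM(T)_{u,v}` for an off-diagonal entry of the promotion matrix of `T`
(`u, v ∈ {1,…,t}`, `1 ≤ i ≤ r-1`), using the oscillization `std(T)`. -/
def PMmem (r n t : ℕ) (T : ℕ → GP r) (i u v : ℕ) : Prop :=
  1 ≤ u ∧ u ≤ t ∧ 1 ≤ v ∧ v ≤ t ∧ u ≠ v ∧ 1 ≤ i ∧ i ≤ r - 1 ∧
    recorded r t (stdT n T) i u (if u < v then v else v + t)

/-- Graph of the partial promotion function `prom_i(T)`: `prom_i(T)(u) = v`.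
By convention `prom_0 = prom_r = id` on `{1,…,t}`. -/
def promRel (r n t : ℕ) (T : ℕ → GP r) (i u v : ℕ) : Prop :=
  if i = 0 ∨ i = r then 1 ≤ u ∧ u ≤ t ∧ u = v else PMmem r n t T i u v

/-- Sum of the first `i` entries (1-indexed prefix sums). -/
def pSum {r : ℕ} (v : GP r) (i : ℕ) : ℤ :=
  ∑ j ∈ Finset.univ.filter (fun j : Fin r => (j : ℕ) < i), v j

/-- The filled oscillized local-rule grid: row index `k` counts down from the top row
(`k = 0` is `std(λ → ν)`), column index `q` goes right; the left column is
`std(κ → λ)` read so that `grid cA κ λ ν k 0 = std(κ→λ)` at position `cA - k`. -/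
def grid {r : ℕ} (cA : ℕ) (κ lam ν : GP r) : ℕ → ℕ → GP r
  | 0, q => oscStep lam ν q
  | k + 1, 0 => oscStep κ lam (cA - (k + 1))
  | k + 1, q + 1 =>
      sortDesc (grid cA κ lam ν k (q + 1) + grid cA κ lam ν (k + 1) q -
        grid cA κ lam ν k q)
  termination_by k q => (k, q)

/-- 1-indexed entry of a vector (0 if out of range). -/
def ent {r : ℕ} (v : GP r) (h : ℕ) : ℤ := if hh : h - 1 < r then v ⟨h - 1, hh⟩ else 0

/-- The chain `j_0 = 1, j_h = ` least `h`-balance point of the lattice word of `T`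
weakly after `j_{h-1}` (in `{1,…,n}`), `none` once undefined. An index `j` is an
`h`-balance point iff `(T j)_h = (T j)_{h+1}` (1-indexed rows). -/
def jChain (r n : ℕ) (T : ℕ → GP r) : ℕ → Option ℕ
  | 0 => some 1
  | h + 1 =>
    match jChain r n T h with
    | none => none
    | some jp =>
      if H : ∃ j, jp ≤ j ∧ j ≤ n ∧ ent (T j) (h + 1) = ent (T j) (h + 2) then
        some (Nat.find H)
      else none

/-- `k`: the largest `h ≤ r-1` such that `j_1, …, j_h` are all defined. -/
def kVal (r n : ℕ) (T : ℕ → GP r) : ℕ :=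
  ((Finset.range r).filter fun h => (jChain r n T h).isSome).sup id

/-- `j_h`, defaulting to `0` when undefined. -/
def jval (r n : ℕ) (T : ℕ → GP r) (h : ℕ) : ℕ := (jChain r n T h).getD 0

/-- `ω_c` for `c ∈ {0,±1,…,±r}`: top-justified column of `c` ones if `c ≥ 0`,
bottom-justified column of `|c|` minus-ones if `c < 0`. -/
def omegaGP (r : ℕ) (c : ℤ) : GP r := fun i =>
  if 0 ≤ c then (if (i : ℕ) < c.natAbs then 1 else 0)
  else (if r - c.natAbs ≤ (i : ℕ) then -1 else 0)

/-- The extremal fluctuating tableau of type `c`: partial sums of the `ω_{c_j}`. -/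
def extremal (r : ℕ) (c : ℕ → ℤ) (k : ℕ) : GP r := ∑ j ∈ Finset.range k, omegaGP r (c j)

/-- Lexicographic order: the first nonzero entry of `β - α` is positive. -/
def ltLex {r : ℕ} (α β : GP r) : Prop := ∃ i : Fin r, (∀ j, j < i → α j = β j) ∧ α i < β i

/-- Cumulative sums of `|c_j|` (block boundaries). -/
def cumC (c : ℕ → ℤ) (j : ℕ) : ℕ := ∑ j' ∈ Finset.range j, (c j').natAbs

/-- Entry `(u,v)` (for `u,v ∈ {1,…,n}`) of the reduced promotion matrix `PMr^i(T)`: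
the number of cells in the block `B_u × B_v` whose promotion-matrix entry contains `i`. -/
def PMr (r n t : ℕ) (T : ℕ → GP r) (c : ℕ → ℤ) (i u v : ℕ) : ℕ :=
  (((Finset.Icc (cumC c (u - 1) + 1) (cumC c u)) ×ˢ
    (Finset.Icc (cumC c (v - 1) + 1) (cumC c v))).filter
      fun p => PMmem r n t T i p.1 p.2).card

/-- The set of `r`-row fluctuating tableaux of length `n`, shape `lam`, type `c`,
in bundled (finitely-indexed) form. -/
def FTset (r n : ℕ) (lam : GP r) (c : Fin n → ℤ) : Set (Fin (n + 1) → GP r) :=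
  {T | (∀ k, Antitone (T k)) ∧ T 0 = 0 ∧ T (Fin.last n) = lam ∧
       ∀ j : Fin n, colStep r (c j) (T j.castSucc) (T j.succ)}



section AuxLocalRule

variable {r : ℕ}
/-- multiset of values of a tuple -/
def mult (f : GP r) : Multiset ℤ := (List.ofFn f : Multiset ℤ)

lemma mult_comp_perm (f : GP r) (σ : Equiv.Perm (Fin r)) : mult (f ∘ ⇑σ) = mult f :=
  Multiset.coe_eq_coe.mpr (σ.ofFn_comp_perm f)

lemma sortDesc_eq_comp (f : GP r) :
    sortDesc f = f ∘ ⇑((Fin.revPerm).trans (Tuple.sort f)) := rfl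

lemma antitone_sortDesc (f : GP r) : Antitone (sortDesc f) := by
  intro i j hij
  exact Tuple.monotone_sort f (by simpa using Fin.rev_le_rev.mpr hij)

lemma mult_sortDesc (f : GP r) : mult (sortDesc f) = mult f := by
  rw [sortDesc_eq_comp]
  exact mult_comp_perm f _

lemma monotone_eq_of_mult (g h : GP r) (hg : Monotone g) (hh : Monotone h)
    (hm : mult g = mult h) : g = h := by
  have : List.ofFn g = List.ofFn h :=
    List.Perm.eq_of_sortedLE hg.sortedLE_ofFn hh.sortedLE_ofFn (Multiset.coe_eq_coe.mp hm)
  exact List.ofFn_inj.mp this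

lemma eq_sortDesc (f g : GP r) (hg : Antitone g) (hm : mult g = mult f) :
    g = sortDesc f := by
  have h1 : Monotone (g ∘ ⇑(Fin.revPerm (n := r))) := by
    intro i j hij; exact hg (by simpa using Fin.rev_le_rev.mpr hij)
  have h2 : Monotone (sortDesc f ∘ ⇑(Fin.revPerm (n := r))) := by
    intro i j hij; exact antitone_sortDesc f (by simpa using Fin.rev_le_rev.mpr hij)
  have hm2 : mult (g ∘ ⇑(Fin.revPerm (n := r))) = mult (sortDesc f ∘ ⇑(Fin.revPerm (n := r))) := by
    rw [mult_comp_perm, mult_comp_perm, mult_sortDesc, hm]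
  have := monotone_eq_of_mult _ _ h1 h2 hm2
  funext i
  have := congrFun this i.rev
  simpa using this

lemma sortDesc_congr {f g : GP r} (hm : mult f = mult g) : sortDesc f = sortDesc g :=
  eq_sortDesc g (sortDesc f) (antitone_sortDesc f) ((mult_sortDesc f).trans hm)




lemma fin_filter_lt_card (m n : ℕ) :
    ((Finset.univ : Finset (Fin m)).filter fun j : Fin m => (j : ℕ) < n).card = min n m := by
  rw [← Finset.card_image_of_injective
    ((Finset.univ : Finset (Fin m)).filter fun j : Fin m => (j : ℕ) < n) Fin.val_injective]
  have : ((Finset.univ : Finset (Fin m)).filter fun j : Fin m => (j : ℕ) < n).image Fin.val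
      = Finset.range (min n m) := by
    ext x
    simp only [Finset.mem_image, Finset.mem_filter, Finset.mem_univ, true_and,
      Finset.mem_range, Nat.lt_min]
    constructor
    · rintro ⟨j, hj, rfl⟩; exact ⟨hj, j.2⟩
    · rintro ⟨h1, h2⟩; exact ⟨⟨x, h2⟩, h1, rfl⟩
  rw [this, Finset.card_range]

lemma rank_orderIso (A : Finset (Fin r)) {m : ℕ} (h : A.card = m) (j : Fin m) :
    (A.filter fun x => x < (A.orderIsoOfFin h j : Fin r)).card = (j : ℕ) := by
  classical
  set e := A.orderIsoOfFin h with he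
  have hinj : Function.Injective (fun j' : Fin m => ((e j' : Fin r))) :=
    fun a b hab => e.injective (Subtype.coe_injective hab)
  have himg : A.filter (fun x => x < (e j : Fin r))
      = (Finset.univ.filter fun j' : Fin m => (j' : ℕ) < (j : ℕ)).image
          (fun j' => (e j' : Fin r)) := by
    ext a
    simp only [Finset.mem_filter, Finset.mem_image, Finset.mem_univ, true_and]
    constructor
    · rintro ⟨ha, hlt⟩
      refine ⟨e.symm ⟨a, ha⟩, ?_, ?_⟩
      · have : e (e.symm ⟨a, ha⟩) < e j := by
          rw [OrderIso.apply_symm_apply]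
          exact_mod_cast hlt
        exact_mod_cast e.lt_iff_lt.mp this
      · rw [OrderIso.apply_symm_apply]
    · rintro ⟨j', hj', rfl⟩
      refine ⟨(e j').2, ?_⟩
      have : e j' < e j := e.lt_iff_lt.mpr (by exact_mod_cast hj')
      exact_mod_cast this
  rw [himg, Finset.card_image_of_injective _ hinj, fin_filter_lt_card]
  exact Nat.min_eq_left (le_of_lt j.2)

lemma filter_rank_lt_card (A : Finset (Fin r)) (n : ℕ) :
    (A.filter fun i => (A.filter fun x => x < i).card < n).card = min n A.card := by
  classical
  set m := A.card with hm
  set e := A.orderIsoOfFin (rfl : A.card = m) with he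
  have hinj : Function.Injective (fun j' : Fin m => ((e j' : Fin r))) :=
    fun a b hab => e.injective (Subtype.coe_injective hab)
  have himg : A.filter (fun i => (A.filter fun x => x < i).card < n)
      = (Finset.univ.filter fun j : Fin m => (j : ℕ) < n).image (fun j => (e j : Fin r)) := by
    ext a
    simp only [Finset.mem_filter, Finset.mem_image, Finset.mem_univ, true_and]
    constructor
    · rintro ⟨ha, hlt⟩
      refine ⟨e.symm ⟨a, ha⟩, ?_, by rw [OrderIso.apply_symm_apply]⟩
      have h2 : (A.filter fun x => x < a).card = ((e.symm ⟨a, ha⟩ : Fin m) : ℕ) := by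
        have h3 := rank_orderIso A (rfl : A.card = m) (e.symm ⟨a, ha⟩)
        rw [show ((A.orderIsoOfFin (rfl : A.card = m) (e.symm ⟨a, ha⟩) : Fin r)) = a from
          congrArg Subtype.val (e.apply_symm_apply ⟨a, ha⟩)] at h3
        exact h3
      rw [← h2]; exact hlt
    · rintro ⟨j, hj, rfl⟩
      refine ⟨(e j).2, ?_⟩
      rw [rank_orderIso A (rfl : A.card = m) j]; exact hj
  rw [himg, Finset.card_image_of_injective _ hinj, fin_filter_lt_card]

lemma filter_le_card_eq (A : Finset (Fin r)) {i : Fin r} (hi : i ∈ A) :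
    (A.filter fun x => x ≤ i).card = (A.filter fun x => x < i).card + 1 := by
  have h : A.filter (fun x => x ≤ i) = insert i (A.filter fun x => x < i) := by
    ext x
    simp only [Finset.mem_filter, Finset.mem_insert]
    constructor
    · rintro ⟨hx, hxi⟩
      rcases eq_or_lt_of_le hxi with h | h
      · exact Or.inl h
      · exact Or.inr ⟨hx, h⟩
    · rintro (rfl | ⟨hx, hxi⟩)
      · exact ⟨hi, le_refl _⟩
      · exact ⟨hx, le_of_lt hxi⟩
  rw [h]
  exact Finset.card_insert_of_notMem
    (fun hmem => absurd (Finset.mem_filter.mp hmem).2 (lt_irrefl i))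

lemma filter_rank_le_card (A : Finset (Fin r)) (n : ℕ) :
    (A.filter fun i => (A.filter fun x => x ≤ i).card ≤ n).card = min n A.card := by
  have h : A.filter (fun i => (A.filter fun x => x ≤ i).card ≤ n)
      = A.filter (fun i => (A.filter fun x => x < i).card < n) := by
    apply Finset.filter_congr
    intro i hi
    rw [filter_le_card_eq A hi]
    omega
  rw [h, filter_rank_lt_card]



variable {r : ℕ}

/-- part of `S` in the `κ`-block of value `v` -/
def Fv (κ : GP r) (S : Finset (Fin r)) (v : ℤ) : Finset (Fin r) := S.filter fun i => κ i = v

/-- part of `S` strictly above the `κ`-block of value `v` -/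
def Gv (κ : GP r) (S : Finset (Fin r)) (v : ℤ) : Finset (Fin r) := S.filter fun i => v < κ i

/-- `S` pushed to the top of each block of `κ` -/
def push (κ : GP r) (S : Finset (Fin r)) : Finset (Fin r) :=
  Finset.univ.filter fun i =>
    ((Fv κ Finset.univ (κ i)).filter fun x => x < i).card < (Fv κ S (κ i)).card

/-- the `n` smallest elements of `S` (all if `n ≥ |S|`) -/
def firstN (S : Finset (Fin r)) (n : ℕ) : Finset (Fin r) :=
  S.filter fun i => (S.filter fun x => x ≤ i).card ≤ n

/-- the `n` largest elements of `S` -/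
def lastN (S : Finset (Fin r)) (n : ℕ) : Finset (Fin r) :=
  S.filter fun i => (S.filter fun x => i ≤ x).card ≤ n

lemma Fv_subset (κ : GP r) {S T : Finset (Fin r)} (h : S ⊆ T) (v : ℤ) :
    Fv κ S v ⊆ Fv κ T v := Finset.filter_subset_filter _ h

lemma Fv_card_le (κ : GP r) {S T : Finset (Fin r)} (h : S ⊆ T) (v : ℤ) :
    (Fv κ S v).card ≤ (Fv κ T v).card := Finset.card_le_card (Fv_subset κ h v)

lemma mem_Fv {κ : GP r} {S : Finset (Fin r)} {v : ℤ} {i : Fin r} :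
    i ∈ Fv κ S v ↔ i ∈ S ∧ κ i = v := Finset.mem_filter

lemma Fv_push (κ : GP r) (S : Finset (Fin r)) (v : ℤ) :
    Fv κ (push κ S) v = (Fv κ Finset.univ v).filter
      fun i => ((Fv κ Finset.univ v).filter fun x => x < i).card < (Fv κ S v).card := by
  ext i
  simp only [mem_Fv, push, Finset.mem_filter, Finset.mem_univ, true_and]
  constructor
  · rintro ⟨hc, hv⟩
    subst hv
    exact ⟨rfl, hc⟩
  · rintro ⟨hv, hc⟩
    subst hv
    exact ⟨hc, rfl⟩

lemma Fv_push_card (κ : GP r) (S : Finset (Fin r)) (v : ℤ) :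
    (Fv κ (push κ S) v).card = (Fv κ S v).card := by
  rw [Fv_push, filter_rank_lt_card]
  exact Nat.min_eq_left (Fv_card_le κ (Finset.subset_univ S) v)

lemma Gv_filter_eq (κ : GP r) (S : Finset (Fin r)) (v w : ℤ) :
    (Gv κ S v).filter (fun i => κ i = w) = if v < w then Fv κ S w else ∅ := by
  split_ifs with hvw
  · ext i
    simp only [Gv, Fv, Finset.mem_filter]
    constructor
    · rintro ⟨⟨h1, -⟩, h3⟩; exact ⟨h1, h3⟩
    · rintro ⟨h1, h3⟩; exact ⟨⟨h1, by rw [h3]; exact hvw⟩, h3⟩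
  · ext i
    simp only [Gv, Finset.mem_filter, Finset.notMem_empty, iff_false]
    intro h
    obtain ⟨⟨-, hlt⟩, hw⟩ := h
    exact hvw (hw ▸ hlt)

lemma Gv_card_congr (κ : GP r) {A B : Finset (Fin r)}
    (h : ∀ w : ℤ, (Fv κ A w).card = (Fv κ B w).card) (v : ℤ) :
    (Gv κ A v).card = (Gv κ B v).card := by
  have hA : (Gv κ A v).card = ∑ w ∈ Finset.univ.image κ, ((Gv κ A v).filter fun i => κ i = w).card :=
    Finset.card_eq_sum_card_fiberwise (fun i _ => Finset.mem_image_of_mem κ (Finset.mem_univ i))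
  have hB : (Gv κ B v).card = ∑ w ∈ Finset.univ.image κ, ((Gv κ B v).filter fun i => κ i = w).card :=
    Finset.card_eq_sum_card_fiberwise (fun i _ => Finset.mem_image_of_mem κ (Finset.mem_univ i))
  rw [hA, hB]
  apply Finset.sum_congr rfl
  intro w _
  rw [Gv_filter_eq, Gv_filter_eq]
  split_ifs
  · exact h w
  · rfl

/-- decomposition of the global position of `i` into above-block and in-block parts -/
lemma global_split (κ : GP r) (hκ : Antitone κ) (S : Finset (Fin r)) (i : Fin r) :
    (S.filter fun x => x ≤ i).card
      = (Gv κ S (κ i)).card + ((Fv κ S (κ i)).filter fun x => x ≤ i).card := by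
  have hsplit : S.filter (fun x => x ≤ i)
      = Gv κ S (κ i) ∪ ((Fv κ S (κ i)).filter fun x => x ≤ i) := by
    ext x
    simp only [Gv, Fv, Finset.mem_union, Finset.mem_filter]
    constructor
    · rintro ⟨hx, hxi⟩
      have hge : κ i ≤ κ x := hκ hxi
      rcases eq_or_lt_of_le hge with h | h
      · exact Or.inr ⟨⟨hx, h.symm⟩, hxi⟩
      · exact Or.inl ⟨hx, h⟩
    · rintro (⟨hx, hlt⟩ | ⟨⟨hx, -⟩, hxi⟩)
      · refine ⟨hx, ?_⟩
        by_contra hxi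
        push_neg at hxi
        exact absurd (hκ (le_of_lt hxi)) (not_le.mpr hlt)
      · exact ⟨hx, hxi⟩
  rw [hsplit, Finset.card_union_of_disjoint]
  rw [Finset.disjoint_left]
  rintro x hx hx'
  simp only [Gv, Fv, Finset.mem_filter] at hx hx'
  exact absurd hx'.1.2 (ne_of_gt hx.2)

lemma Fv_firstN (κ : GP r) (hκ : Antitone κ) (S : Finset (Fin r)) (n : ℕ) (v : ℤ) :
    Fv κ (firstN S n) v = (Fv κ S v).filter
      (fun i => ((Fv κ S v).filter fun x => x ≤ i).card ≤ n - (Gv κ S v).card) := by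
  ext i
  simp only [Finset.mem_filter]
  simp only [Fv, firstN, Finset.mem_filter]
  constructor
  · rintro ⟨⟨hi, hg⟩, hv⟩
    subst hv
    have hsplit := global_split κ hκ S i
    have hmem : i ∈ (Fv κ S (κ i)).filter fun x => x ≤ i :=
      Finset.mem_filter.mpr ⟨mem_Fv.mpr ⟨hi, rfl⟩, le_refl i⟩
    have hpos : 0 < ((Fv κ S (κ i)).filter fun x => x ≤ i).card :=
      Finset.card_pos.mpr ⟨i, hmem⟩
    simp only [Fv] at hsplit hpos ⊢
    exact ⟨⟨hi, by trivial⟩, by omega⟩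
  · rintro ⟨⟨hi, hv⟩, hl⟩
    subst hv
    have hsplit := global_split κ hκ S i
    have hmem : i ∈ (Fv κ S (κ i)).filter fun x => x ≤ i :=
      Finset.mem_filter.mpr ⟨mem_Fv.mpr ⟨hi, rfl⟩, le_refl i⟩
    have hpos : 0 < ((Fv κ S (κ i)).filter fun x => x ≤ i).card :=
      Finset.card_pos.mpr ⟨i, hmem⟩
    simp only [Fv] at hsplit hpos hl
    exact ⟨⟨hi, by omega⟩, by trivial⟩

lemma Fv_firstN_card (κ : GP r) (hκ : Antitone κ) (S : Finset (Fin r)) (n : ℕ) (v : ℤ) :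
    (Fv κ (firstN S n) v).card = min (n - (Gv κ S v).card) (Fv κ S v).card := by
  rw [Fv_firstN κ hκ, filter_rank_le_card]

lemma Fv_push_prefix (κ : GP r) (S : Finset (Fin r)) (v : ℤ) {i : Fin r}
    (hi : i ∈ Fv κ (push κ S) v) :
    (Fv κ (push κ S) v).filter (fun x => x ≤ i)
      = (Fv κ Finset.univ v).filter (fun x => x ≤ i) := by
  apply Finset.Subset.antisymm
  · exact Finset.filter_subset_filter _ (Fv_subset κ (Finset.subset_univ (push κ S)) v)
  · intro x hx
    obtain ⟨hxb, hxi⟩ := Finset.mem_filter.mp hx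
    rw [Fv_push] at hi
    obtain ⟨hib, hrk⟩ := Finset.mem_filter.mp hi
    refine Finset.mem_filter.mpr ⟨?_, hxi⟩
    rw [Fv_push]
    refine Finset.mem_filter.mpr ⟨hxb, lt_of_le_of_lt ?_ hrk⟩
    exact Finset.card_le_card (Finset.monotone_filter_right _
      (fun y _ hy => lt_of_lt_of_le hy hxi))

lemma Fv_firstN_push (κ : GP r) (hκ : Antitone κ) (S : Finset (Fin r)) (n : ℕ) (v : ℤ) :
    Fv κ (firstN (push κ S) n) v
      = (Fv κ Finset.univ v).filter (fun i =>
          ((Fv κ Finset.univ v).filter fun x => x < i).card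
            < min (n - (Gv κ S v).card) (Fv κ S v).card) := by
  rw [Fv_firstN κ hκ, Gv_card_congr κ (fun w => Fv_push_card κ S w)]
  ext i
  simp only [Finset.mem_filter]
  constructor
  · rintro ⟨hiU, hloc⟩
    have hiU' := hiU
    rw [Fv_push] at hiU'
    obtain ⟨hib, hrk⟩ := Finset.mem_filter.mp hiU'
    have hpre := Fv_push_prefix κ S v hiU
    rw [hpre, filter_le_card_eq _ hib] at hloc
    exact ⟨hib, lt_min (by omega) hrk⟩
  · rintro ⟨hib, hlt⟩
    rw [Nat.lt_min] at hlt
    have hiU : i ∈ Fv κ (push κ S) v := by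
      rw [Fv_push]; exact Finset.mem_filter.mpr ⟨hib, hlt.2⟩
    refine ⟨hiU, ?_⟩
    rw [Fv_push_prefix κ S v hiU, filter_le_card_eq _ hib]
    omega

lemma Fv_push_firstN (κ : GP r) (hκ : Antitone κ) (S : Finset (Fin r)) (n : ℕ) (v : ℤ) :
    Fv κ (push κ (firstN S n)) v
      = (Fv κ Finset.univ v).filter (fun i =>
          ((Fv κ Finset.univ v).filter fun x => x < i).card
            < min (n - (Gv κ S v).card) (Fv κ S v).card) := by
  rw [Fv_push, Fv_firstN_card κ hκ]

lemma firstN_push_eq (κ : GP r) (hκ : Antitone κ) (S : Finset (Fin r)) (n : ℕ) :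
    firstN (push κ S) n = push κ (firstN S n) := by
  ext i
  have h1 : i ∈ firstN (push κ S) n ↔ i ∈ Fv κ (firstN (push κ S) n) (κ i) := by
    simp [mem_Fv]
  have h2 : i ∈ push κ (firstN S n) ↔ i ∈ Fv κ (push κ (firstN S n)) (κ i) := by
    simp [mem_Fv]
  rw [h1, h2, Fv_firstN_push κ hκ S n (κ i), Fv_push_firstN κ hκ S n (κ i)]

lemma firstN_subset (S : Finset (Fin r)) (n : ℕ) : firstN S n ⊆ S :=
  Finset.filter_subset _ _

lemma mem_firstN_of_push (κ : GP r) (hκ : Antitone κ) (S : Finset (Fin r)) (n : ℕ)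
    {i : Fin r} (hpush : i ∈ push κ (firstN S n)) (hiS : i ∈ S) : i ∈ firstN S n := by
  have h2 : i ∈ Fv κ (push κ (firstN S n)) (κ i) := mem_Fv.mpr ⟨hpush, rfl⟩
  rw [Fv_push_firstN κ hκ S n (κ i)] at h2
  obtain ⟨hib, hrk⟩ := Finset.mem_filter.mp h2
  rw [Nat.lt_min] at hrk
  have hsplit := global_split κ hκ S i
  have hsub : ((Fv κ S (κ i)).filter fun x => x ≤ i).card
      ≤ ((Fv κ Finset.univ (κ i)).filter fun x => x ≤ i).card :=
    Finset.card_le_card (Finset.filter_subset_filter _ (Fv_subset κ (Finset.subset_univ S) _))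
  rw [filter_le_card_eq _ hib] at hsub
  refine Finset.mem_filter.mpr ⟨hiS, ?_⟩
  omega

lemma mult_count (f : GP r) (w : ℤ) :
    Multiset.count w (mult f) = (Finset.univ.filter fun i => f i = w).card := by
  have h1 : (Finset.univ.filter fun i : Fin r => f i = w)
      = (Finset.univ.filter fun i : Fin r => w = f i) := by
    ext i; simp [eq_comm]
  rw [mult, ← Fin.univ_val_map f, Multiset.count_map, h1, Finset.card_def, Finset.filter_val]

lemma count_add_ind (κ : GP r) (A : Finset (Fin r)) (w : ℤ) :
    (Finset.univ.filter fun i => (κ + indV A) i = w).card + (Fv κ A w).card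
      = (Fv κ A (w - 1)).card + (Fv κ Finset.univ w).card := by
  have hsplit : (Finset.univ.filter fun i => (κ + indV A) i = w)
      = (Finset.univ.filter fun i : Fin r => i ∈ A ∧ κ i = w - 1)
        ∪ (Finset.univ.filter fun i : Fin r => i ∉ A ∧ κ i = w) := by
    ext i
    rw [Finset.mem_union, Finset.mem_filter, Finset.mem_filter, Finset.mem_filter]
    by_cases hA : i ∈ A <;>
      simp only [Pi.add_apply, indV, hA, if_true, if_false, Finset.mem_union,
        Finset.mem_filter, Finset.mem_univ, true_and, not_true, not_false_iff,
        false_and, and_false, or_false, false_or, true_and] <;> omega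
  have hdisj : Disjoint (Finset.univ.filter fun i : Fin r => i ∈ A ∧ κ i = w - 1)
      (Finset.univ.filter fun i : Fin r => i ∉ A ∧ κ i = w) := by
    rw [Finset.disjoint_left]
    rintro x hx hx'
    simp only [Finset.mem_filter, Finset.mem_univ, true_and] at hx hx'
    exact hx'.1 hx.1
  have e1 : (Finset.univ.filter fun i : Fin r => i ∈ A ∧ κ i = w - 1) = Fv κ A (w - 1) := by
    ext i; simp [Fv]
  have e2 : (Finset.univ.filter fun i : Fin r => i ∉ A ∧ κ i = w)
      = (Fv κ Finset.univ w).filter (fun i => i ∉ A) := by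
    ext i; simp [Fv]; tauto
  have e3 : (Fv κ Finset.univ w).filter (fun i => i ∈ A) = Fv κ A w := by
    ext i; simp [Fv]; tauto
  have e4 := Finset.card_filter_add_card_filter_not
    (s := Fv κ Finset.univ w) (p := fun i => i ∈ A)
  rw [hsplit, Finset.card_union_of_disjoint hdisj, e1, e2]
  rw [e3] at e4
  omega

lemma mult_ind_congr (κ : GP r) {A B : Finset (Fin r)}
    (h : ∀ v : ℤ, (Fv κ A v).card = (Fv κ B v).card) :
    mult (κ + indV A) = mult (κ + indV B) := by
  apply Multiset.ext.mpr
  intro w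
  rw [mult_count, mult_count]
  have h1 := count_add_ind κ A w
  have h2 := count_add_ind κ B w
  have h3 := h w
  have h4 := h (w - 1)
  omega

lemma antitone_add_push (κ : GP r) (hκ : Antitone κ) (S : Finset (Fin r)) :
    Antitone (κ + indV (push κ S)) := by
  intro i j hij
  have hk := hκ hij
  by_cases heq : κ j = κ i
  · have hpush : j ∈ push κ S → i ∈ push κ S := by
      intro hj
      simp only [push, Finset.mem_filter, Finset.mem_univ, true_and] at hj ⊢
      rw [heq] at hj
      exact lt_of_le_of_lt (Finset.card_le_card (Finset.monotone_filter_right _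
        (fun y _ hy => lt_of_lt_of_le hy hij))) hj
    simp only [Pi.add_apply, indV, heq]
    split_ifs with h1 h2
    · exact le_refl _
    · exact absurd (hpush h1) h2
    · linarith
    · exact le_refl _
  · have hlt : κ j < κ i := lt_of_le_of_ne hk heq
    simp only [Pi.add_apply, indV]
    split_ifs <;> linarith

lemma sortDesc_add_eq_push (κ : GP r) (hκ : Antitone κ) (S : Finset (Fin r)) :
    sortDesc (κ + indV S) = κ + indV (push κ S) :=
  (eq_sortDesc (κ + indV S) (κ + indV (push κ S)) (antitone_add_push κ hκ S)
    (mult_ind_congr κ (fun v => Fv_push_card κ S v))).symm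


lemma oscStep_add (f : GP r) (S : Finset (Fin r)) (n : ℕ) :
    oscStep f (f + indV S) n = f + indV (firstN S n) := by
  have hS : (Finset.univ.filter fun i' : Fin r => (f + indV S) i' ≠ f i') = S := by
    ext i; by_cases h : i ∈ S <;> simp [indV, h]
  funext i
  simp only [oscStep]
  rw [hS]
  by_cases h : i ∈ S
  · have hlt : f i < (f + indV S) i := by simp [indV, h]
    simp only [if_pos hlt]
    by_cases hc : (S.filter fun x => x ≤ i).card ≤ n
    · rw [if_pos ⟨h, hc⟩]
      have hmem : i ∈ firstN S n := Finset.mem_filter.mpr ⟨h, hc⟩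
      simp [indV, h, hmem]
    · rw [if_neg (fun hh => hc hh.2)]
      have hmem : i ∉ firstN S n := fun hm => hc (Finset.mem_filter.mp hm).2
      simp [indV, hmem]
  · rw [if_neg (fun hh : _ ∧ _ => h hh.1)]
    have hmem : i ∉ firstN S n := fun hm => h (Finset.mem_filter.mp hm).1
    simp [indV, hmem]

lemma oscStep_sub (f : GP r) (S : Finset (Fin r)) (n : ℕ) :
    oscStep f (f - indV S) n = f - indV (lastN S n) := by
  have hS : (Finset.univ.filter fun i' : Fin r => (f - indV S) i' ≠ f i') = S := by
    ext i; by_cases h : i ∈ S <;> simp [indV, h]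
  funext i
  simp only [oscStep]
  rw [hS]
  by_cases h : i ∈ S
  · have hlt : ¬ (f i < (f - indV S) i) := by simp [indV, h]
    simp only [if_neg hlt]
    by_cases hc : (S.filter fun x => i ≤ x).card ≤ n
    · rw [if_pos ⟨h, hc⟩]
      have hmem : i ∈ lastN S n := Finset.mem_filter.mpr ⟨h, hc⟩
      simp [indV, h, hmem]
    · rw [if_neg (fun hh => hc hh.2)]
      have hmem : i ∉ lastN S n := fun hm => hc (Finset.mem_filter.mp hm).2
      simp [indV, hmem]
  · rw [if_neg (fun hh : _ ∧ _ => h hh.1)]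
    have hmem : i ∉ lastN S n := fun hm => h (Finset.mem_filter.mp hm).1
    simp [indV, hmem]

lemma revNeg_revNeg (f : GP r) : revNeg (revNeg f) = f := by
  funext i; simp [revNeg, Fin.rev_rev]

lemma revNeg_injective : Function.Injective (revNeg (r := r)) := by
  intro f g h
  rw [← revNeg_revNeg f, h, revNeg_revNeg]

lemma antitone_revNeg {f : GP r} (hf : Antitone f) : Antitone (revNeg f) := by
  intro i j hij
  simp only [revNeg, neg_le_neg_iff]
  exact hf (Fin.rev_le_rev.mpr hij)

lemma mult_revNeg (f : GP r) : mult (revNeg f) = Multiset.map Neg.neg (mult f) := by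
  have h1 : revNeg f = (fun i => - f i) ∘ ⇑(Fin.revPerm (n := r)) := by
    funext i; simp [revNeg]
  have h2 : ∀ g : GP r, mult g = Multiset.map g Finset.univ.val := by
    intro g; rw [mult, ← Fin.univ_val_map]
  rw [h1, mult_comp_perm, h2, h2, Multiset.map_map]
  rfl

lemma sortDesc_revNeg (f : GP r) : sortDesc (revNeg f) = revNeg (sortDesc f) :=
  (eq_sortDesc (revNeg f) (revNeg (sortDesc f)) (antitone_revNeg (antitone_sortDesc f))
    (by rw [mult_revNeg, mult_revNeg, mult_sortDesc])).symm

lemma mem_image_rev {S : Finset (Fin r)} {i : Fin r} :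
    i ∈ S.image Fin.rev ↔ i.rev ∈ S := by
  simp only [Finset.mem_image]
  constructor
  · rintro ⟨a, ha, rfl⟩; rwa [Fin.rev_rev]
  · intro h; exact ⟨i.rev, h, Fin.rev_rev i⟩

lemma indV_image_rev (S : Finset (Fin r)) (i : Fin r) :
    indV (S.image Fin.rev) i = indV S i.rev := by
  simp only [indV, mem_image_rev]

lemma image_rev_image_rev (S : Finset (Fin r)) : (S.image Fin.rev).image Fin.rev = S := by
  rw [Finset.image_image]
  have : (Fin.rev ∘ Fin.rev : Fin r → Fin r) = id := by funext x; simp [Fin.rev_rev]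
  rw [this, Finset.image_id]

lemma lastN_image_rev (S : Finset (Fin r)) (n : ℕ) :
    (lastN S n).image Fin.rev = firstN (S.image Fin.rev) n := by
  ext i
  rw [mem_image_rev]
  simp only [lastN, firstN, Finset.mem_filter, mem_image_rev]
  have hcard : ((S.image Fin.rev).filter fun x => x ≤ i).card
      = (S.filter fun x => i.rev ≤ x).card := by
    rw [← Finset.card_image_of_injective (S.filter fun x => i.rev ≤ x) Fin.rev_injective]
    congr 1
    ext x
    rw [Finset.mem_filter, mem_image_rev, Finset.mem_image]
    constructor
    · rintro ⟨hx, hxi⟩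
      exact ⟨x.rev, Finset.mem_filter.mpr ⟨hx, by rwa [← Fin.rev_le_rev] at hxi⟩,
        Fin.rev_rev x⟩
    · rintro ⟨a, ha, rfl⟩
      obtain ⟨ha1, ha2⟩ := Finset.mem_filter.mp ha
      rw [Fin.rev_rev]
      exact ⟨ha1, by rwa [← Fin.rev_le_rev, Fin.rev_rev] at ha2⟩
  rw [hcard]

lemma sdiff_union_count (κ : GP r) (hκ : Antitone κ) (S : Finset (Fin r)) (n : ℕ) (v : ℤ) :
    (Fv κ ((S \ firstN S n) ∪ push κ (firstN S n)) v).card = (Fv κ S v).card := by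
  have hT : firstN S n ⊆ S := firstN_subset S n
  have hdisj : Disjoint (S \ firstN S n) (push κ (firstN S n)) := by
    rw [Finset.disjoint_left]
    intro x hx hx'
    obtain ⟨hxS, hxT⟩ := Finset.mem_sdiff.mp hx
    exact hxT (mem_firstN_of_push κ hκ S n hx' hxS)
  have h1 : Fv κ ((S \ firstN S n) ∪ push κ (firstN S n)) v
      = Fv κ (S \ firstN S n) v ∪ Fv κ (push κ (firstN S n)) v := by
    ext i; simp [Fv]; tauto
  have hdisj2 : Disjoint (Fv κ (S \ firstN S n) v) (Fv κ (push κ (firstN S n)) v) :=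
    Finset.disjoint_filter_filter hdisj
  rw [h1, Finset.card_union_of_disjoint hdisj2]
  have h2 : Fv κ (S \ firstN S n) v = Fv κ S v \ Fv κ (firstN S n) v := by
    ext i; simp [Fv]; tauto
  rw [h2, Finset.card_sdiff_of_subset (Fv_subset κ hT v), Fv_push_card]
  have := Fv_card_le κ hT v
  omega

lemma core2pos (κ : GP r) (hκ : Antitone κ) (S : Finset (Fin r)) (n : ℕ) :
    sortDesc (κ + indV S + indV (push κ (firstN S n)) - indV (firstN S n))
      = κ + indV (push κ S) := by
  have hre : κ + indV S + indV (push κ (firstN S n)) - indV (firstN S n)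
      = κ + indV ((S \ firstN S n) ∪ push κ (firstN S n)) := by
    funext i
    have h1 := firstN_subset S n (x := i)
    have h2 := mem_firstN_of_push κ hκ S n (i := i)
    simp only [Pi.add_apply, Pi.sub_apply, indV, Finset.mem_union, Finset.mem_sdiff]
    by_cases a1 : i ∈ S <;> by_cases a2 : i ∈ firstN S n <;>
      by_cases a3 : i ∈ push κ (firstN S n) <;>
      simp only [a1, a2, a3, if_true, if_false, not_true, not_false_iff, true_and, and_true,
        false_and, and_false, true_or, or_true, false_or, or_false] <;>
      first
        | (exact absurd (h1 a2) a1)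
        | (exact absurd (h2 a3 a1) a2)
        | ring1
  rw [hre, ← sortDesc_add_eq_push κ hκ S]
  exact sortDesc_congr (mult_ind_congr κ (fun v => sdiff_union_count κ hκ S n v))

lemma main_pos (κ lam : GP r) (hκ : Antitone κ) (S : Finset (Fin r)) (n : ℕ)
    (μ α β : GP r)
    (hμ : μ = sortDesc ((lam + indV S) + κ - lam))
    (hβ : β = oscStep lam (lam + indV S) n)
    (hα : α = oscStep κ μ n) :
    α = sortDesc (β + κ - lam) ∧ μ = sortDesc ((lam + indV S) + α - β) := by
  have hsimp : (lam + indV S) + κ - lam = κ + indV S := by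
    funext i; simp only [Pi.add_apply, Pi.sub_apply]; ring
  rw [hsimp] at hμ
  have hμ' : μ = κ + indV (push κ S) := by rw [hμ, sortDesc_add_eq_push κ hκ]
  have hβ' : β = lam + indV (firstN S n) := by rw [hβ, oscStep_add]
  have hα' : α = κ + indV (push κ (firstN S n)) := by
    rw [hα, hμ', oscStep_add, firstN_push_eq κ hκ]
  constructor
  · rw [hα', hβ']
    have hbk : (lam + indV (firstN S n)) + κ - lam = κ + indV (firstN S n) := by
      funext i; simp only [Pi.add_apply, Pi.sub_apply]; ring
    rw [hbk, sortDesc_add_eq_push κ hκ]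
  · rw [hμ', hα', hβ']
    have hre : (lam + indV S) + (κ + indV (push κ (firstN S n))) - (lam + indV (firstN S n))
        = κ + indV S + indV (push κ (firstN S n)) - indV (firstN S n) := by
      funext i; simp only [Pi.add_apply, Pi.sub_apply]; ring
    rw [hre, core2pos κ hκ S n]

lemma main_neg (κ lam : GP r) (hκ : Antitone κ) (S : Finset (Fin r)) (n : ℕ)
    (μ α β : GP r)
    (hμ : μ = sortDesc ((lam - indV S) + κ - lam))
    (hβ : β = oscStep lam (lam - indV S) n)
    (hα : α = oscStep κ μ n) :
    α = sortDesc (β + κ - lam) ∧ μ = sortDesc ((lam - indV S) + α - β) := by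
  have hκ' : Antitone (revNeg κ) := antitone_revNeg hκ
  have hsimp : (lam - indV S) + κ - lam = κ - indV S := by
    funext i; simp only [Pi.add_apply, Pi.sub_apply]; ring
  rw [hsimp] at hμ
  have hrev1 : revNeg (κ - indV S) = revNeg κ + indV (S.image Fin.rev) := by
    funext i
    simp only [revNeg, Pi.sub_apply, Pi.add_apply, indV_image_rev]
    ring
  have hμrev : revNeg μ = revNeg κ + indV (push (revNeg κ) (S.image Fin.rev)) := by
    rw [hμ, ← sortDesc_revNeg, hrev1, sortDesc_add_eq_push (revNeg κ) hκ']
  have hμ' : μ = κ - indV ((push (revNeg κ) (S.image Fin.rev)).image Fin.rev) := by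
    have h := congrArg revNeg hμrev
    rw [revNeg_revNeg] at h
    rw [h]
    funext i
    simp only [revNeg, Pi.add_apply, Pi.sub_apply, indV_image_rev, Fin.rev_rev]
    ring
  have hlastS : lastN S n = (firstN (S.image Fin.rev) n).image Fin.rev := by
    have h := congrArg (fun X : Finset (Fin r) => X.image Fin.rev) (lastN_image_rev S n)
    simpa [image_rev_image_rev] using h
  have hβ' : β = lam - indV ((firstN (S.image Fin.rev) n).image Fin.rev) := by
    rw [hβ, oscStep_sub, hlastS]
  have hW : lastN ((push (revNeg κ) (S.image Fin.rev)).image Fin.rev) n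
      = (push (revNeg κ) (firstN (S.image Fin.rev) n)).image Fin.rev := by
    have h := lastN_image_rev ((push (revNeg κ) (S.image Fin.rev)).image Fin.rev) n
    rw [image_rev_image_rev, firstN_push_eq (revNeg κ) hκ'] at h
    have h2 := congrArg (fun X : Finset (Fin r) => X.image Fin.rev) h
    simpa [image_rev_image_rev] using h2
  have hα' : α = κ - indV ((push (revNeg κ) (firstN (S.image Fin.rev) n)).image Fin.rev) := by
    rw [hα, hμ', oscStep_sub, hW]
  constructor
  · rw [hα', hβ']
    have hbk : (lam - indV ((firstN (S.image Fin.rev) n).image Fin.rev)) + κ - lam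
        = κ - indV ((firstN (S.image Fin.rev) n).image Fin.rev) := by
      funext i; simp only [Pi.add_apply, Pi.sub_apply]; ring
    rw [hbk]
    have hrev2 : κ - indV ((firstN (S.image Fin.rev) n).image Fin.rev)
        = revNeg (revNeg κ + indV (firstN (S.image Fin.rev) n)) := by
      funext i
      simp only [revNeg, Pi.sub_apply, Pi.add_apply, indV_image_rev, Fin.rev_rev]
      ring
    rw [hrev2, sortDesc_revNeg, sortDesc_add_eq_push (revNeg κ) hκ']
    funext i
    simp only [revNeg, Pi.add_apply, Pi.sub_apply, indV_image_rev, Fin.rev_rev]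
    ring
  · rw [hμ']
    have hre : (lam - indV S) + α - β
        = revNeg (revNeg κ + indV (S.image Fin.rev)
            + indV (push (revNeg κ) (firstN (S.image Fin.rev) n))
            - indV (firstN (S.image Fin.rev) n)) := by
      rw [hα', hβ']
      funext i
      simp only [revNeg, Pi.add_apply, Pi.sub_apply, indV_image_rev, Fin.rev_rev]
      ring
    rw [hre, sortDesc_revNeg, core2pos (revNeg κ) hκ' (S.image Fin.rev) n]
    funext i
    simp only [revNeg, Pi.add_apply, Pi.sub_apply, indV_image_rev, Fin.rev_rev]
    ring


end AuxLocalRule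

/-- **Lemma (refinement of a local rule diagram).** Let `κ →^c λ →^d ν` with
`μ = sort(ν + κ - λ)`, let `d = d₁ + d₂` with `d₁, d₂` weakly of the same sign as `d`,
let `β` be the `|d₁|`-th term of `std(λ → ν)` and `α` the `|d₁|`-th term of
`std(κ → μ)`.  Then `α = sort(β + κ - λ)` and `μ = sort(ν + α - β)`; i.e. both squares
of the refined diagram are local rule diagrams. -/
theorem local_rule_refinement
    (r : ℕ) (κ lam ν μ α β : GP r) (c d d1 d2 : ℤ)
    (hκ : Antitone κ) (hlam : Antitone lam) (hν : Antitone ν)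
    (h1 : colStep r c κ lam) (h2 : colStep r d lam ν)
    (hμ : μ = sortDesc (ν + κ - lam))
    (hd : d = d1 + d2)
    (hdsign1 : 0 ≤ d → 0 ≤ d1 ∧ 0 ≤ d2)
    (hdsign2 : d ≤ 0 → d1 ≤ 0 ∧ d2 ≤ 0)
    (hβ : β = oscStep lam ν d1.natAbs)
    (hα : α = oscStep κ μ d1.natAbs) :
    α = sortDesc (β + κ - lam) ∧ μ = sortDesc (ν + α - β) := by
  obtain ⟨S₂, hScard, hSdef⟩ := h2
  by_cases hd0 : 0 ≤ d
  · rw [if_pos hd0] at hSdef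
    subst hSdef
    exact main_pos κ lam hκ S₂ d1.natAbs μ α β hμ hβ hα
  · rw [if_neg hd0] at hSdef
    subst hSdef
    exact main_neg κ lam hκ S₂ d1.natAbs μ α β hμ hβ hα

end FT
end
end

section
/- Fix r, n, an r-row generalized partition λ, a type c = (c_1,…,c_n) ∈ {0,±1,…,±r}^n, and a permutation σ of {1,…,n}. Then the set of r-row fluctuating tableaux of length n, shape λ, and type (c_1,…,c_n) is finite and has the same cardinality as the set of r-row fluctuating tableaux of length n, shape λ, and type (c_{σ(1)},…,c_{σ(n)}). -/
open scoped Classical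

noncomputable section

namespace FT

-- auxiliary

def δv (r : ℕ) : GP r := fun i => (r : ℤ) - 1 - (i : ℤ)

def colVec (r : ℕ) (c : ℤ) (S : Finset (Fin r)) : GP r :=
  if 0 ≤ c then indV S else -indV S

lemma colStep_iff {r : ℕ} (c : ℤ) (μ ν : GP r) :
    colStep r c μ ν ↔ ∃ S : Finset (Fin r), S.card = c.natAbs ∧ ν = μ + colVec r c S := by
  unfold colStep colVec
  by_cases h : 0 ≤ c <;> simp [h, sub_eq_add_neg]

lemma colVec_abs {r : ℕ} (c : ℤ) (S : Finset (Fin r)) (i j : Fin r) :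
    -1 ≤ colVec r c S i - colVec r c S j := by
  unfold colVec indV
  by_cases h : 0 ≤ c <;> simp [h] <;> split <;> split <;> norm_num

lemma colVec_inj {r : ℕ} (c : ℤ) (S S' : Finset (Fin r))
    (h : colVec r c S = colVec r c S') : S = S' := by
  ext i
  have := congrFun h i
  unfold colVec indV at this
  by_cases hc : 0 ≤ c <;> simp [hc] at this <;>
    · constructor <;> intro hi <;> by_contra hni <;> simp [hi, hni] at this

def stepF (r : ℕ) (c : ℤ) (μ : GP r) : Finset (GP r) :=
  ((Finset.univ.powersetCard c.natAbs).image fun S => μ + colVec r c S).filter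
    fun ν => Antitone ν

lemma mem_stepF {r : ℕ} {c : ℤ} {μ ν : GP r} :
    ν ∈ stepF r c μ ↔ Antitone ν ∧ colStep r c μ ν := by
  rw [stepF, Finset.mem_filter, colStep_iff, and_comm]
  apply and_congr_right
  intro _
  simp only [Finset.mem_image, Finset.mem_powersetCard_univ]
  constructor
  · rintro ⟨S, hS, rfl⟩; exact ⟨S, hS, rfl⟩
  · rintro ⟨S, hS, rfl⟩; exact ⟨S, hS, rfl⟩

-- gap lemma
lemma strictAnti_gap {r : ℕ} {α : Fin r → ℤ} (h : StrictAnti α) :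
    ∀ i j : Fin r, i ≤ j → (j : ℤ) - (i : ℤ) ≤ α i - α j := by
  intro i j hij
  obtain ⟨d, hd⟩ : ∃ d : ℕ, (j : ℕ) = (i : ℕ) + d := ⟨j - i, by omega⟩
  induction d generalizing j with
  | zero =>
    have : i = j := Fin.ext (by omega)
    subst this; simp
  | succ d ih =>
    have hjr : (i : ℕ) + d < r := by omega
    set j' : Fin r := ⟨(i : ℕ) + d, by omega⟩ with hj'
    have h1 : (j' : ℤ) - (i : ℤ) ≤ α i - α j' := ih j' (by simp [hj', Fin.le_def]) (by simp [hj'])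
    have h2 : α j' > α j := h (by simp [Fin.lt_def, hj']; omega)
    have : (j : ℤ) = (j' : ℤ) + 1 := by simp [hj', hd]; omega
    omega

lemma strictAnti_of_anti_inj {r : ℕ} {α : Fin r → ℤ} (h : Antitone α)
    (hinj : Function.Injective α) : StrictAnti α := by
  intro i j hij
  exact lt_of_le_of_ne (h hij.le) fun he => (hij.ne (hinj he.symm)).elim

lemma antitone_shift {r : ℕ} {μ : GP r} (hμ : Antitone μ) (c : ℤ) (S : Finset (Fin r)) :
    Antitone (μ + δv r + colVec r c S) := by
  intro i j hij
  rcases eq_or_lt_of_le hij with rfl | hlt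
  · exact le_refl _
  · have h1 : μ j ≤ μ i := hμ hij
    have h2 : (j : ℤ) - (i : ℤ) ≥ 1 := by
      have := Fin.lt_def.mp hlt; omega
    have h3 := colVec_abs c S i j
    simp only [Pi.add_apply, δv]
    omega

lemma strictAnti_addδ {r : ℕ} {ν : GP r} (hν : Antitone ν) : StrictAnti (ν + δv r) := by
  intro i j hij
  have h1 : ν j ≤ ν i := hν hij.le
  have h2 : (j : ℤ) - (i : ℤ) ≥ 1 := by
    have := Fin.lt_def.mp hij; omega
  simp only [Pi.add_apply, δv]
  omega

lemma antitone_of_strictAnti_addδ {r : ℕ} {ν : GP r} (h : StrictAnti (ν + δv r)) :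
    Antitone ν := by
  intro i j hij
  have := strictAnti_gap h i j hij
  simp only [Pi.add_apply, δv] at this
  omega


abbrev Rng (r : ℕ) := AddMonoidAlgebra ℤ (GP r)

def AA (r : ℕ) (β : GP r) : Rng r :=
  ∑ w : Equiv.Perm (Fin r), AddMonoidAlgebra.single (β ∘ w) ((Equiv.Perm.sign w : ℤ))

lemma AA_eq_zero {r : ℕ} {β : GP r} (i j : Fin r) (hij : i ≠ j) (hβ : β i = β j) :
    AA r β = 0 := by
  unfold AA
  set f : Equiv.Perm (Fin r) → Rng r :=
    fun w => AddMonoidAlgebra.single (β ∘ w) ((Equiv.Perm.sign w : ℤ)) with hf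
  set g : ∀ w : Equiv.Perm (Fin r), w ∈ Finset.univ → Equiv.Perm (Fin r) :=
    fun w _ => w * Equiv.swap (w⁻¹ i) (w⁻¹ j) with hg
  have hab : ∀ w : Equiv.Perm (Fin r), w⁻¹ i ≠ w⁻¹ j :=
    fun w h => hij (by simpa using congrArg w h)
  have h : ∀ w (hw : w ∈ Finset.univ), f w + f (g w hw) = 0 := by
    intro w hw
    have hcomp : β ∘ ⇑(w * Equiv.swap (w⁻¹ i) (w⁻¹ j)) = β ∘ ⇑w := by
      funext k
      simp only [Function.comp_apply, Equiv.Perm.mul_apply]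
      rcases eq_or_ne k (w⁻¹ i) with rfl | h1
      · rw [Equiv.swap_apply_left]; simp [hβ]
      rcases eq_or_ne k (w⁻¹ j) with rfl | h2
      · rw [Equiv.swap_apply_right]; simp [hβ]
      · rw [Equiv.swap_apply_of_ne_of_ne h1 h2]
    have hsgn : ((Equiv.Perm.sign (w * Equiv.swap (w⁻¹ i) (w⁻¹ j)) : ℤˣ) : ℤ)
        = -((Equiv.Perm.sign w : ℤˣ) : ℤ) := by
      rw [Equiv.Perm.sign_mul, Equiv.Perm.sign_swap (hab w)]
      simp
    simp only [hf, hg, hcomp, hsgn, ← Finsupp.single_add]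
    simp
  have g_ne : ∀ w (hw : w ∈ Finset.univ), f w ≠ 0 → g w hw ≠ w := by
    intro w hw _ hcontr
    have h2 : (w * Equiv.swap (w⁻¹ i) (w⁻¹ j)) (w⁻¹ i) = w (w⁻¹ i) := by
      simp only [hg] at hcontr; rw [hcontr]
    rw [Equiv.Perm.mul_apply, Equiv.swap_apply_left] at h2
    simp at h2
    exact hij h2.symm
  have g_mem : ∀ w (hw : w ∈ Finset.univ), g w hw ∈ Finset.univ := fun w _ => Finset.mem_univ _
  have g_inv : ∀ w (hw : w ∈ Finset.univ), g (g w hw) (g_mem w hw) = w := by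
    intro w hw
    simp only [hg]
    have hinv : (w * Equiv.swap (w⁻¹ i) (w⁻¹ j))⁻¹ i = w⁻¹ j := by
      simp [mul_inv_rev, Equiv.swap_apply_left]
    have hinv2 : (w * Equiv.swap (w⁻¹ i) (w⁻¹ j))⁻¹ j = w⁻¹ i := by
      simp [mul_inv_rev, Equiv.swap_apply_right]
    rw [hinv, hinv2, Equiv.swap_comm, mul_assoc]
    simp
  exact Finset.sum_involution g h g_ne g_mem g_inv


def Av (r : ℕ) (μ : GP r) : Rng r := AA r (μ + δv r)
def Ev (r : ℕ) (c : ℤ) : Rng r :=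
  ∑ S ∈ Finset.univ.powersetCard c.natAbs, AddMonoidAlgebra.single (colVec r c S) (1:ℤ)


lemma colVec_comp {r : ℕ} (c : ℤ) (S : Finset (Fin r)) (w : Equiv.Perm (Fin r)) (k : Fin r) :
    colVec r c S k = colVec r c (S.image w) (w k) := by
  have hmem : w k ∈ S.image ⇑w ↔ k ∈ S := by
    simp [Finset.mem_image, w.injective.eq_iff]
  unfold colVec indV
  by_cases h : 0 ≤ c <;> simp [h, hmem]

lemma step1 {r : ℕ} (μ : GP r) (c : ℤ) :
    Av r μ * Ev r c
      = ∑ S ∈ Finset.univ.powersetCard c.natAbs, AA r (μ + δv r + colVec r c S) := by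
  unfold Av Ev AA
  rw [Finset.sum_mul_sum]
  have inner : ∀ w : Equiv.Perm (Fin r),
      (∑ S ∈ Finset.univ.powersetCard c.natAbs,
        AddMonoidAlgebra.single ((μ + δv r) ∘ ⇑w) ((Equiv.Perm.sign w : ℤ)) *
          AddMonoidAlgebra.single (colVec r c S) 1)
      = ∑ S ∈ Finset.univ.powersetCard c.natAbs,
          AddMonoidAlgebra.single ((μ + δv r + colVec r c S) ∘ ⇑w) ((Equiv.Perm.sign w : ℤ)) := by
    intro w
    refine Finset.sum_nbij' (fun S => S.image ⇑w) (fun S => S.image ⇑w⁻¹) ?_ ?_ ?_ ?_ ?_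
    · intro S hS
      simp only [Finset.mem_powersetCard_univ] at hS ⊢
      rw [Finset.card_image_of_injective _ w.injective, hS]
    · intro S hS
      simp only [Finset.mem_powersetCard_univ] at hS ⊢
      rw [Finset.card_image_of_injective _ w⁻¹.injective, hS]
    · intro S _
      have : ⇑w⁻¹ ∘ ⇑w = id := by funext k; simp
      simp [Finset.image_image, this]
    · intro S _
      have : ⇑w ∘ ⇑w⁻¹ = id := by funext k; simp
      simp [Finset.image_image, this]
    · intro S _
      rw [AddMonoidAlgebra.single_mul_single, mul_one]
      congr 1
      funext k
      simp only [Function.comp_apply, Pi.add_apply]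
      rw [colVec_comp c S w k]
  rw [Finset.sum_congr rfl fun w _ => inner w, Finset.sum_comm]


lemma Av_mul_Ev {r : ℕ} {μ : GP r} (hμ : Antitone μ) (c : ℤ) :
    Av r μ * Ev r c = ∑ ν ∈ stepF r c μ, Av r ν := by
  rw [step1]
  rw [← Finset.sum_filter_add_sum_filter_not (Finset.univ.powersetCard c.natAbs)
      (fun S => Function.Injective (μ + δv r + colVec r c S))]
  have hzero : ∑ S ∈ (Finset.univ.powersetCard c.natAbs).filter
      (fun S => ¬ Function.Injective (μ + δv r + colVec r c S)),
      AA r (μ + δv r + colVec r c S) = 0 := by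
    apply Finset.sum_eq_zero
    intro S hS
    rw [Finset.mem_filter] at hS
    obtain ⟨i, j, hval, hne⟩ := Function.not_injective_iff.mp hS.2
    exact AA_eq_zero i j hne hval
  rw [hzero, add_zero]
  apply Finset.sum_bij (fun S _ => μ + colVec r c S)
  · intro S hS
    rw [Finset.mem_filter, Finset.mem_powersetCard_univ] at hS
    rw [mem_stepF]
    have hα : μ + δv r + colVec r c S = (μ + colVec r c S) + δv r := by
      rw [add_right_comm]
    have hstrict : StrictAnti ((μ + colVec r c S) + δv r) := by
      rw [← hα]
      exact strictAnti_of_anti_inj (antitone_shift hμ c S) hS.2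
    refine ⟨antitone_of_strictAnti_addδ hstrict, ?_⟩
    rw [colStep_iff]
    exact ⟨S, hS.1, rfl⟩
  · intro S hS S' hS' h
    exact colVec_inj c S S' (add_left_cancel h)
  · intro ν hν
    rw [mem_stepF] at hν
    obtain ⟨hanti, hcs⟩ := hν
    obtain ⟨S, hcard, rfl⟩ := (colStep_iff c μ ν).mp hcs
    refine ⟨S, ?_, rfl⟩
    rw [Finset.mem_filter, Finset.mem_powersetCard_univ]
    refine ⟨hcard, ?_⟩
    have hα : μ + δv r + colVec r c S = (μ + colVec r c S) + δv r := by
      rw [add_right_comm]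
    rw [hα]
    exact (strictAnti_addδ hanti).injective
  · intro S hS
    unfold Av
    congr 1
    rw [add_right_comm]

lemma perm_eq_one {r : ℕ} {f : Fin r → ℤ} (hf : StrictAnti f) {w : Equiv.Perm (Fin r)}
    (hw : StrictAnti (f ∘ ⇑w)) : w = 1 := by
  have hmono : StrictMono ⇑w := by
    intro i j hij
    have h1 : f (w j) < f (w i) := hw hij
    rcases lt_trichotomy (w i) (w j) with h | h | h
    · exact h
    · exact absurd (congrArg f h) (ne_of_gt h1)
    · exact absurd (hf h) (not_lt_of_gt h1)
  have hmono' : StrictMono ⇑w⁻¹ := by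
    intro a b hab
    by_contra hc
    push_neg at hc
    have := hmono.monotone hc
    simp at this
    exact absurd hab (not_lt_of_ge this)
  have hid : ⇑w = id := by
    apply (StrictMono.range_inj hmono strictMono_id).mp
    rw [Set.range_id]
    exact w.surjective.range_eq
  apply Equiv.ext
  intro i
  rw [hid]
  rfl

lemma Av_apply {r : ℕ} {μ lam : GP r} (hμ : Antitone μ) (hlam : Antitone lam) :
    (Av r μ).coeff (lam + δv r) = if μ = lam then 1 else 0 := by
  unfold Av AA
  rw [AddMonoidAlgebra.coeff_sum, Finsupp.finset_sum_apply]
  have key : ∀ w : Equiv.Perm (Fin r),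
      (AddMonoidAlgebra.single ((μ + δv r) ∘ ⇑w) ((Equiv.Perm.sign w : ℤ))).coeff (lam + δv r)
        = if (μ + δv r) ∘ ⇑w = lam + δv r then ((Equiv.Perm.sign w : ℤ)) else 0 := by
    intro w
    rw [AddMonoidAlgebra.coeff_single, Finsupp.single_apply]
  rw [Finset.sum_congr rfl fun w _ => key w]
  by_cases he : μ = lam
  · subst he
    rw [if_pos rfl, Finset.sum_eq_single_of_mem 1 (Finset.mem_univ _)]
    · rw [if_pos]
      · simp
      · funext k; simp
    · intro w _ hw
      rw [if_neg]
      intro hcon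
      exact hw (perm_eq_one (strictAnti_addδ hμ) (by rw [hcon]; exact strictAnti_addδ hμ))
  · rw [if_neg he]
    apply Finset.sum_eq_zero
    intro w _
    rw [if_neg]
    intro hcon
    have hw1 : w = 1 := perm_eq_one (strictAnti_addδ hμ) (by rw [hcon]; exact strictAnti_addδ hlam)
    subst hw1
    apply he
    funext i
    have := congrFun hcon i
    simp only [Function.comp_apply, Equiv.Perm.coe_one, id_eq, Pi.add_apply] at this
    omega

def Nc (r : ℕ) (lam : GP r) : GP r → List ℤ → ℕ
  | μ, [] => if μ = lam then 1 else 0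
  | μ, c :: cs => ∑ ν ∈ stepF r c μ, Nc r lam ν cs

def Pl (r : ℕ) : List ℤ → Rng r
  | [] => 1
  | c :: cs => Ev r c * Pl r cs

lemma Nc_eq_coeff {r : ℕ} {lam : GP r} (hlam : Antitone lam) :
    ∀ (cs : List ℤ) (μ : GP r), Antitone μ →
      (Nc r lam μ cs : ℤ) = (Av r μ * Pl r cs).coeff (lam + δv r) := by
  intro cs
  induction cs with
  | nil =>
    intro μ hμ
    show ((if μ = lam then 1 else 0 : ℕ) : ℤ) = (Av r μ * 1).coeff (lam + δv r)
    rw [mul_one, Av_apply hμ hlam]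
    split <;> simp
  | cons c cs ih =>
    intro μ hμ
    have hmul : Av r μ * Pl r (c :: cs) = ∑ ν ∈ stepF r c μ, (Av r ν * Pl r cs) := by
      show Av r μ * (Ev r c * Pl r cs) = _
      rw [← mul_assoc, Av_mul_Ev hμ c, Finset.sum_mul]
    rw [hmul, AddMonoidAlgebra.coeff_sum, Finsupp.finset_sum_apply]
    show ((∑ ν ∈ stepF r c μ, Nc r lam ν cs : ℕ) : ℤ) = _
    push_cast
    apply Finset.sum_congr rfl
    intro ν hν
    exact ih ν (mem_stepF.mp hν).1

lemma ncard_biUnion_disj {α β : Type*} (s : Finset α) (f : α → Set β)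
    (hf : ∀ a ∈ s, (f a).Finite)
    (hd : ∀ a ∈ s, ∀ b ∈ s, a ≠ b → Disjoint (f a) (f b)) :
    (⋃ a ∈ s, f a).ncard = ∑ a ∈ s, (f a).ncard := by
  induction s using Finset.induction_on with
  | empty => simp
  | insert a s ha ih =>
    rw [Finset.set_biUnion_insert, Finset.sum_insert ha]
    have hfin1 : (f a).Finite := hf a (Finset.mem_insert_self a s)
    have hfin2 : (⋃ b ∈ s, f b).Finite :=
      Set.Finite.biUnion s.finite_toSet
        (fun b hb => hf b (Finset.mem_insert_of_mem hb))
    have hdisj : Disjoint (f a) (⋃ b ∈ s, f b) := by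
      rw [Set.disjoint_left]
      intro x hx hx2
      rw [Set.mem_iUnion₂] at hx2
      obtain ⟨b, hb, hxb⟩ := hx2
      have hne : a ≠ b := fun he => ha (he ▸ hb)
      exact Set.disjoint_left.mp
        (hd a (Finset.mem_insert_self a s) b (Finset.mem_insert_of_mem hb) hne) hx hxb
    rw [Set.ncard_union_eq hdisj hfin1 hfin2]
    rw [ih (fun b hb => hf b (Finset.mem_insert_of_mem hb))
        (fun b hb b' hb' => hd b (Finset.mem_insert_of_mem hb) b' (Finset.mem_insert_of_mem hb'))]

def SFT (r n : ℕ) (μ lam : GP r) (c : Fin n → ℤ) : Set (Fin (n + 1) → GP r) :=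
  {T | (∀ k, Antitone (T k)) ∧ T 0 = μ ∧ T (Fin.last n) = lam ∧
       ∀ j : Fin n, colStep r (c j) (T j.castSucc) (T j.succ)}

lemma SFT_card {r : ℕ} (lam : GP r) :
    ∀ (n : ℕ) (c : Fin n → ℤ) (μ : GP r), Antitone μ →
      (SFT r n μ lam c).Finite ∧ (SFT r n μ lam c).ncard = Nc r lam μ (List.ofFn c) := by
  intro n
  induction n with
  | zero =>
    intro c μ hμ
    have hset : SFT r 0 μ lam c
        = if μ = lam then {fun _ => μ} else (∅ : Set (Fin 1 → GP r)) := by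
      ext T
      by_cases he : μ = lam
      · subst he
        simp only [if_pos rfl, Set.mem_singleton_iff]
        constructor
        · rintro ⟨h1, h2, h3, h4⟩
          funext k
          have hk : k = 0 := Fin.fin_one_eq_zero k
          rw [hk, h2]
        · rintro rfl
          exact ⟨fun k => hμ, rfl, rfl, fun j => j.elim0⟩
      · simp only [if_neg he, Set.mem_empty_iff_false, iff_false]
        rintro ⟨h1, h2, h3, h4⟩
        apply he
        rw [← h2, ← h3]
        congr 1
    rw [hset]
    show _ ∧ _ = (if μ = lam then 1 else 0)
    by_cases he : μ = lam <;> simp [he]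
  | succ n ih =>
    intro c μ hμ
    set c' : Fin n → ℤ := fun i => c i.succ with hc'
    set F : (Fin (n + 2) → GP r) → (Fin (n + 1) → GP r) := fun T => T ∘ Fin.succ with hF
    have hinj : Set.InjOn F (SFT r (n+1) μ lam c) := by
      intro T1 h1 T2 h2 he
      funext k
      refine Fin.cases ?_ ?_ k
      · rw [h1.2.1, h2.2.1]
      · intro i
        exact congrFun he i
    have himg : F '' (SFT r (n+1) μ lam c) = ⋃ ν ∈ stepF r (c 0) μ, SFT r n ν lam c' := by
      ext U
      constructor
      · rintro ⟨T, hT, rfl⟩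
        obtain ⟨h1, h2, h3, h4⟩ := hT
        rw [Set.mem_iUnion₂]
        refine ⟨T 1, ?_, ?_⟩
        · rw [mem_stepF]
          refine ⟨h1 1, ?_⟩
          have := h4 0
          rwa [Fin.castSucc_zero, Fin.succ_zero_eq_one, h2] at this
        · refine ⟨fun k => h1 _, ?_, ?_, ?_⟩
          · show T (Fin.succ 0) = T 1
            rw [Fin.succ_zero_eq_one]
          · show T ((Fin.last n).succ) = lam
            rw [Fin.succ_last, h3]
          · intro j
            show colStep r (c j.succ) (T (j.castSucc.succ)) (T (j.succ.succ))
            rw [Fin.succ_castSucc]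
            exact h4 j.succ
      · intro hU
        rw [Set.mem_iUnion₂] at hU
        obtain ⟨ν, hν, hUm⟩ := hU
        obtain ⟨hanti, hcs⟩ := mem_stepF.mp hν
        obtain ⟨h1, h2, h3, h4⟩ := hUm
        set T : Fin (n + 2) → GP r := fun i => Fin.cases μ U i with hT
        have hT0 : T 0 = μ := rfl
        have hTs : ∀ i : Fin (n + 1), T i.succ = U i := fun i => by simp [hT]
        refine ⟨T, ⟨?_, hT0, ?_, ?_⟩, ?_⟩
        · intro k
          refine Fin.cases ?_ ?_ k
          · rw [hT0]; exact hμ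
          · intro i
            rw [hTs i]; exact h1 i
        · rw [← Fin.succ_last, hTs, h3]
        · intro j
          refine Fin.cases ?_ ?_ j
          · have e0 : (0 : Fin (n + 1)).succ = Fin.succ 0 := rfl
            rw [Fin.castSucc_zero, hT0, e0, hTs, h2]
            exact hcs
          · intro i
            rw [← Fin.succ_castSucc, hTs, hTs]
            exact h4 i
        · funext i
          exact hTs i
    have hfin_each : ∀ ν ∈ stepF r (c 0) μ, (SFT r n ν lam c').Finite :=
      fun ν hν => (ih c' ν (mem_stepF.mp hν).1).1
    have hUfin : (⋃ ν ∈ stepF r (c 0) μ, SFT r n ν lam c').Finite :=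
      Set.Finite.biUnion (stepF r (c 0) μ).finite_toSet hfin_each
    have himgfin : (F '' (SFT r (n+1) μ lam c)).Finite := himg ▸ hUfin
    have hfin : (SFT r (n+1) μ lam c).Finite := Set.Finite.of_finite_image himgfin hinj
    refine ⟨hfin, ?_⟩
    have hdisj : ∀ ν ∈ stepF r (c 0) μ, ∀ ν' ∈ stepF r (c 0) μ, ν ≠ ν' →
        Disjoint (SFT r n ν lam c') (SFT r n ν' lam c') := by
      intro ν _ ν' _ hne
      rw [Set.disjoint_left]
      intro U hU hU'
      exact hne (hU.2.1.symm.trans hU'.2.1)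
    have h5 : (SFT r (n+1) μ lam c).ncard = (F '' (SFT r (n+1) μ lam c)).ncard :=
      (Set.ncard_image_of_injOn hinj).symm
    rw [h5, himg, ncard_biUnion_disj _ _ hfin_each hdisj]
    rw [show List.ofFn c = c 0 :: List.ofFn c' from List.ofFn_succ (f := c)]
    show _ = ∑ ν ∈ stepF r (c 0) μ, Nc r lam ν (List.ofFn c')
    apply Finset.sum_congr rfl
    intro ν hν
    exact (ih c' ν (mem_stepF.mp hν).1).2

/-- **Corollary (rearrangement invariance).** For fixed `r`, `n`, a generalized
partition `λ`, a type `c ∈ {0,±1,…,±r}^n` and a permutation `σ` of `{1,…,n}`, the set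
of `r`-row fluctuating tableaux of length `n`, shape `λ` and type `c` is finite and has
the same cardinality as the set of those of type `(c_{σ(1)},…,c_{σ(n)})`. -/
theorem rearrangement_invariance
    (r n : ℕ) (lam : GP r) (hlam : Antitone lam)
    (c : Fin n → ℤ) (hc : ∀ j, (c j).natAbs ≤ r)
    (σ : Equiv.Perm (Fin n)) :
    (FTset r n lam c).Finite ∧
    (FTset r n lam c).ncard = (FTset r n lam (c ∘ σ)).ncard := by
  have h0 : Antitone (0 : GP r) := fun i j _ => le_refl _
  have hFT1 : FTset r n lam c = SFT r n 0 lam c := rfl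
  have hFT2 : FTset r n lam (c ∘ σ) = SFT r n 0 lam (c ∘ σ) := rfl
  obtain ⟨hfin1, hcard1⟩ := SFT_card lam n c 0 h0
  obtain ⟨hfin2, hcard2⟩ := SFT_card lam n (c ∘ σ) 0 h0
  refine ⟨hFT1 ▸ hfin1, ?_⟩
  rw [hFT1, hFT2, hcard1, hcard2]
  have hPl : ∀ cs : List ℤ, Pl r cs = (cs.map (Ev r)).prod := by
    intro cs
    induction cs with
    | nil => rfl
    | cons a t ih => simp [Pl, ih]
  have hProd : Pl r (List.ofFn c) = Pl r (List.ofFn (c ∘ σ)) := by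
    rw [hPl, hPl, List.map_ofFn, List.map_ofFn, List.prod_ofFn, List.prod_ofFn]
    simp only [Function.comp]
    exact (Equiv.prod_comp σ fun j => Ev r (c j)).symm
  have h1 := Nc_eq_coeff hlam (List.ofFn c) 0 h0
  have h2 := Nc_eq_coeff hlam (List.ofFn (c ∘ σ)) 0 h0
  rw [← hProd, ← h1] at h2
  exact_mod_cast h2.symm


end FT
end
end

section
/- Fix r and a type c = (c_1,…,c_n) ∈ {0,±1,…,±r}^n, and set ω_c := Σ_{i=1}^n ω_{c_i}, where ω_k := (1^k, 0^{r−k}) for 0 ≤ k ≤ r and ω_{−k} := (0^{r−k}, (−1)^k). Then: (1) the sequence of partial sums (Σ_{j=1}^{i} ω_{c_j})_{i=0}^{n} is an r-row fluctuating tableau of type c and shape ω_c (the extremal fluctuating tableau of type c); (2) it is the unique r-row fluctuating tableau of type c with shape ω_c; (3) every other r-row fluctuating tableau of type c has shape strictly smaller than ω_c in lexicographic order, where α <_lex β means the first nonzero entry of β − α is positive. -/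
open scoped Classical

noncomputable section

namespace FT

lemma cardLt (r i : ℕ) : (Finset.univ.filter fun j : Fin r => (j:ℕ) < i).card = min i r := by
  induction r generalizing i with
  | zero => simp
  | succ r ih =>
    have h := Fin.card_filter_univ_succ' (fun j : Fin (r+1) => (j:ℕ) < i)
    have h2 : (Finset.univ.filter fun x : Fin r => ((Fin.succ x : Fin (r+1)) : ℕ) < i)
        = Finset.univ.filter fun x : Fin r => (x:ℕ) < i - 1 := by
      apply Finset.filter_congr; intro x _; simp only [Fin.val_succ]; omega
    rw [h2] at h
    rw [h, ih]
    simp only [Fin.val_zero]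
    split_ifs with hh <;> simp_all <;> omega

lemma cardNotLt (r i : ℕ) :
    (Finset.univ.filter fun j : Fin r => ¬ (j:ℕ) < i).card = r - min i r := by
  have h := Finset.card_filter_add_card_filter_not (s := (Finset.univ : Finset (Fin r)))
    (p := fun j : Fin r => (j:ℕ) < i)
  rw [cardLt] at h
  simp only [Finset.card_univ, Fintype.card_fin] at h
  omega

lemma pSum_indV {r : ℕ} (S : Finset (Fin r)) (i : ℕ) :
    pSum (indV S) i = ((S.filter fun j : Fin r => (j:ℕ) < i).card : ℤ) := by
  unfold pSum indV
  rw [Finset.sum_boole]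
  congr 2
  ext x
  simp only [Finset.mem_filter, Finset.mem_univ, true_and]
  tauto

lemma card_filter_lt_le {r : ℕ} (S : Finset (Fin r)) (i : ℕ) :
    (S.filter fun j : Fin r => (j:ℕ) < i).card ≤ min i r ∧
    S.card ≤ (S.filter fun j : Fin r => (j:ℕ) < i).card + (r - min i r) := by
  constructor
  · calc (S.filter fun j : Fin r => (j:ℕ) < i).card
        ≤ (Finset.univ.filter fun j : Fin r => (j:ℕ) < i).card := by
          apply Finset.card_le_card; intro x hx
          simp only [Finset.mem_filter, Finset.mem_univ, true_and] at *
          exact hx.2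
      _ = min i r := cardLt r i
  · have h := Finset.card_filter_add_card_filter_not (s := S)
      (p := fun j : Fin r => (j:ℕ) < i)
    have h2 : (S.filter fun j : Fin r => ¬ (j:ℕ) < i).card ≤ r - min i r := by
      rw [← cardNotLt r i]
      apply Finset.card_le_card; intro x hx
      simp only [Finset.mem_filter, Finset.mem_univ, true_and] at *
      exact hx.2
    omega

lemma pSum_omega_nonneg (r : ℕ) (c : ℤ) (hc : c.natAbs ≤ r) (h : 0 ≤ c) (i : ℕ) :
    pSum (omegaGP r c) i = ((min i c.natAbs : ℕ) : ℤ) := by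
  have : omegaGP r c = indV (Finset.univ.filter fun j : Fin r => (j:ℕ) < c.natAbs) := by
    funext j; simp [omegaGP, indV, h]
  rw [this, pSum_indV, Finset.filter_filter]
  have : (Finset.univ.filter fun j : Fin r => (j:ℕ) < c.natAbs ∧ (j:ℕ) < i)
      = Finset.univ.filter fun j : Fin r => (j:ℕ) < min c.natAbs i := by
    apply Finset.filter_congr; intro x _; omega
  rw [this, cardLt]
  omega

lemma pSum_omega_neg (r : ℕ) (c : ℤ) (hc : c.natAbs ≤ r) (h : ¬ 0 ≤ c) (i : ℕ) :
    pSum (omegaGP r c) i = ((min (min (r - c.natAbs) i) r : ℕ) : ℤ) - ((min i r : ℕ) : ℤ) := by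
  have : omegaGP r c = -indV (Finset.univ.filter fun j : Fin r => r - c.natAbs ≤ (j:ℕ)) := by
    funext j; simp [omegaGP, indV, h]; split_ifs <;> norm_num
  rw [this]
  have hneg : pSum (-indV (Finset.univ.filter fun j : Fin r => r - c.natAbs ≤ (j:ℕ))) i
      = - pSum (indV (Finset.univ.filter fun j : Fin r => r - c.natAbs ≤ (j:ℕ))) i := by
    unfold pSum
    rw [← Finset.sum_neg_distrib]
    rfl
  rw [hneg, pSum_indV]
  have key : ((Finset.univ.filter fun j : Fin r => r - c.natAbs ≤ (j:ℕ)).filter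
        fun j : Fin r => (j:ℕ) < i).card
      + min (min (r - c.natAbs) i) r = min i r := by
    rw [Finset.filter_filter, ← cardLt r (min (r - c.natAbs) i), ← cardLt r i,
      ← Finset.card_union_of_disjoint]
    · congr 1; ext x
      simp only [Finset.mem_union, Finset.mem_filter, Finset.mem_univ, true_and]
      omega
    · rw [Finset.disjoint_filter]
      intro x _ hx
      omega
  obtain ⟨k, hk⟩ : ∃ k, r - c.natAbs = k := ⟨_, rfl⟩
  rw [hk] at key ⊢
  obtain ⟨q1, hq1⟩ : ∃ q1, min k i = q1 := ⟨_, rfl⟩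
  rw [hq1] at key ⊢
  obtain ⟨q, hq⟩ : ∃ q, min q1 r = q := ⟨_, rfl⟩
  rw [hq] at key ⊢
  obtain ⟨u, hu⟩ : ∃ u, min i r = u := ⟨_, rfl⟩
  rw [hu] at key ⊢
  clear this hneg hk hq1 hq hu h hc
  omega

lemma pSum_add {r : ℕ} (u v : GP r) (i : ℕ) : pSum (u + v) i = pSum u i + pSum v i := by
  unfold pSum; rw [← Finset.sum_add_distrib]; rfl

lemma pSum_sub {r : ℕ} (u v : GP r) (i : ℕ) : pSum (u - v) i = pSum u i - pSum v i := by
  unfold pSum; rw [← Finset.sum_sub_distrib]; rfl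

lemma step_pSum {r : ℕ} {cc : ℤ} {μ lam : GP r} (h : colStep r cc μ lam)
    (hcc : cc.natAbs ≤ r) (i : ℕ) :
    pSum lam i ≤ pSum μ i + pSum (omegaGP r cc) i := by
  obtain ⟨S, hS, hstep⟩ := h
  by_cases hsgn : 0 ≤ cc
  · rw [if_pos hsgn] at hstep
    rw [hstep, pSum_add, pSum_indV, pSum_omega_nonneg r cc hcc hsgn]
    have h1 := (card_filter_lt_le S i).1
    have hc1 : (S.filter fun j : Fin r => (j:ℕ) < i).card ≤ S.card := Finset.card_filter_le _ _
    rw [hS] at hc1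
    obtain ⟨p, hp⟩ : ∃ p, (S.filter fun j : Fin r => (j:ℕ) < i).card = p := ⟨_, rfl⟩
    rw [hp] at h1 hc1 ⊢
    obtain ⟨m, hm⟩ : ∃ m, cc.natAbs = m := ⟨_, rfl⟩
    rw [hm] at hc1 ⊢
    obtain ⟨u, hu⟩ : ∃ u, min i r = u := ⟨_, rfl⟩
    rw [hu] at h1
    obtain ⟨w, hw⟩ : ∃ w, min i m = w := ⟨_, rfl⟩
    rw [hw]
    clear hp hm hstep hsgn
    omega
  · rw [if_neg hsgn] at hstep
    rw [hstep, pSum_sub, pSum_indV, pSum_omega_neg r cc hcc hsgn]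
    have h2 := (card_filter_lt_le S i).2
    rw [hS] at h2
    obtain ⟨p, hp⟩ : ∃ p, (S.filter fun j : Fin r => (j:ℕ) < i).card = p := ⟨_, rfl⟩
    rw [hp] at h2 ⊢
    obtain ⟨m, hm⟩ : ∃ m, cc.natAbs = m := ⟨_, rfl⟩
    rw [hm] at h2 hcc ⊢
    obtain ⟨u, hu⟩ : ∃ u, min i r = u := ⟨_, rfl⟩
    rw [hu] at h2 ⊢
    obtain ⟨k, hk⟩ : ∃ k, r - m = k := ⟨_, rfl⟩
    rw [hk]
    obtain ⟨q1, hq1⟩ : ∃ q1, min k i = q1 := ⟨_, rfl⟩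
    rw [hq1]
    obtain ⟨q, hq⟩ : ∃ q, min q1 r = q := ⟨_, rfl⟩
    rw [hq]
    clear hp hm hstep hsgn
    omega

lemma pSum_succ {r : ℕ} (v : GP r) (j : Fin r) :
    pSum v ((j:ℕ) + 1) = pSum v (j:ℕ) + v j := by
  unfold pSum
  have : (Finset.univ.filter fun x : Fin r => (x:ℕ) < (j:ℕ) + 1)
      = insert j (Finset.univ.filter fun x : Fin r => (x:ℕ) < (j:ℕ)) := by
    ext x
    simp only [Finset.mem_insert, Finset.mem_filter, Finset.mem_univ, true_and, Fin.ext_iff]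
    omega
  rw [this, Finset.sum_insert (by simp)]
  ring

lemma pSum_ext {r : ℕ} {u v : GP r} (h : ∀ i, pSum u i = pSum v i) : u = v := by
  funext j
  have h1 := h (j:ℕ)
  have h2 := h ((j:ℕ) + 1)
  rw [pSum_succ, pSum_succ, h1] at h2
  linarith


lemma omegaGP_antitone (r : ℕ) (c : ℤ) : Antitone (omegaGP r c) := by
  intro a b hab
  have hab' : (a:ℕ) ≤ (b:ℕ) := hab
  unfold omegaGP
  split_ifs <;> omega

lemma extremal_antitone (r : ℕ) (c : ℕ → ℤ) (k : ℕ) : Antitone (extremal r c k) := by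
  intro a b hab
  unfold extremal
  rw [Finset.sum_apply, Finset.sum_apply]
  exact Finset.sum_le_sum fun j _ => omegaGP_antitone r (c j) hab

lemma extremal_succ (r : ℕ) (c : ℕ → ℤ) (k : ℕ) :
    extremal r c (k + 1) = extremal r c k + omegaGP r (c k) :=
  Finset.sum_range_succ _ _

lemma cardGe (r a : ℕ) :
    (Finset.univ.filter fun j : Fin r => a ≤ (j:ℕ)).card = r - min a r := by
  rw [← cardNotLt r a]
  congr 1
  apply Finset.filter_congr
  intro x _
  constructor <;> omega

lemma extremal_colStep (r : ℕ) (c : ℕ → ℤ) (k : ℕ) (hk : (c k).natAbs ≤ r) :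
    colStep r (c k) (extremal r c k) (extremal r c (k + 1)) := by
  by_cases hsgn : 0 ≤ c k
  · refine ⟨Finset.univ.filter fun j : Fin r => (j:ℕ) < (c k).natAbs, ?_, ?_⟩
    · rw [cardLt]; omega
    · rw [if_pos hsgn, extremal_succ]
      congr 1
      funext j
      simp only [omegaGP, indV, if_pos hsgn, Finset.mem_filter, Finset.mem_univ, true_and]
  · refine ⟨Finset.univ.filter fun j : Fin r => r - (c k).natAbs ≤ (j:ℕ), ?_, ?_⟩
    · rw [cardGe]
      have : min (r - (c k).natAbs) r = r - (c k).natAbs := Nat.min_eq_left (Nat.sub_le _ _)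
      omega
    · rw [if_neg hsgn, extremal_succ]
      funext j
      simp only [omegaGP, indV, if_neg hsgn, Finset.mem_filter, Finset.mem_univ, true_and,
        Pi.add_apply, Pi.sub_apply]
      split_ifs <;> ring

lemma pSum_zero {r : ℕ} (i : ℕ) : pSum (0 : GP r) i = 0 := by
  simp [pSum]

lemma extremal_zero (r : ℕ) (c : ℕ → ℤ) : extremal r c 0 = 0 :=
  Finset.sum_range_zero _

lemma diff_mono (r n : ℕ) (c : ℕ → ℤ) (hc : ∀ j < n, (c j).natAbs ≤ r)
    (T : ℕ → GP r) (hT : ∀ j < n, colStep r (c j) (T j) (T (j + 1)))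
    (i : ℕ) {k l : ℕ} (hkl : k ≤ l) (hl : l ≤ n) :
    pSum (extremal r c k) i - pSum (T k) i ≤ pSum (extremal r c l) i - pSum (T l) i := by
  induction l with
  | zero =>
    have : k = 0 := Nat.le_zero.mp hkl
    subst this; exact le_refl _
  | succ l ih =>
    rcases Nat.lt_or_ge k (l + 1) with hlt | hge
    · have h1 := ih (by omega) (by omega)
      have hstep := step_pSum (hT l (by omega)) (hc l (by omega)) i
      have hE : pSum (extremal r c (l + 1)) i
          = pSum (extremal r c l) i + pSum (omegaGP r (c l)) i := by
        rw [extremal_succ, pSum_add]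
      linarith
    · have : k = l + 1 := by omega
      subst this; exact le_refl _

/-- **Proposition (extremal fluctuating tableau).** For a type `c ∈ {0,±1,…,±r}^n`,
the sequence of partial sums of the `ω_{c_j}` is an `r`-row fluctuating tableau of type
`c` and shape `ω_c`; it is the unique such tableau with shape `ω_c`; and every other
fluctuating tableau of type `c` has shape strictly smaller in lexicographic order. -/
theorem extremal_tableau
    (r n : ℕ) (c : ℕ → ℤ) (hc : ∀ j < n, (c j).natAbs ≤ r) :
    IsFT r n (extremal r c) c ∧
    (∀ T : ℕ → GP r, IsFT r n T c → T n = extremal r c n →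
      ∀ k ≤ n, T k = extremal r c k) ∧
    (∀ T : ℕ → GP r, IsFT r n T c → (∃ k ≤ n, T k ≠ extremal r c k) →
      ltLex (T n) (extremal r c n)) := by
  refine ⟨⟨⟨fun k _ => extremal_antitone r c k, fun j hj => extremal_colStep r c j (hc j hj)⟩,
    extremal_zero r c⟩, ?_, ?_⟩
  · rintro T ⟨⟨-, hstepT⟩, hT0⟩ hTn k hk
    apply pSum_ext
    intro i
    have h1 := diff_mono r n c hc T hstepT i (Nat.zero_le k) hk
    have h2 := diff_mono r n c hc T hstepT i hk le_rfl
    rw [hT0, extremal_zero, pSum_zero] at h1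
    rw [hTn] at h2
    linarith
  · rintro T ⟨⟨-, hstepT⟩, hT0⟩ ⟨k, hk, hne⟩
    have hdom : ∀ i, pSum (T n) i ≤ pSum (extremal r c n) i := by
      intro i
      have h1 := diff_mono r n c hc T hstepT i (Nat.zero_le n) le_rfl
      rw [hT0, extremal_zero, pSum_zero] at h1
      linarith
    have hex : ∃ i, pSum (T k) i ≠ pSum (extremal r c k) i := by
      by_contra h
      push_neg at h
      exact hne (pSum_ext h)
    obtain ⟨i0, hi0⟩ := hex
    have hstrict : pSum (T n) i0 < pSum (extremal r c n) i0 := by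
      have h1 := diff_mono r n c hc T hstepT i0 (Nat.zero_le k) hk
      have h2 := diff_mono r n c hc T hstepT i0 hk le_rfl
      rw [hT0, extremal_zero, pSum_zero] at h1
      have : pSum (T k) i0 < pSum (extremal r c k) i0 := lt_of_le_of_ne (by linarith) hi0
      linarith
    have hTnE : T n ≠ extremal r c n := by
      intro h; rw [h] at hstrict; exact lt_irrefl _ hstrict
    set F := Finset.univ.filter fun j : Fin r => T n j ≠ extremal r c n j with hF
    have hFne : F.Nonempty := by
      obtain ⟨j, hj⟩ := Function.ne_iff.mp hTnE
      exact ⟨j, by simp [hF, hj]⟩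
    set i1 := F.min' hFne with hi1
    have hprev : ∀ j, j < i1 → T n j = extremal r c n j := by
      intro j hj
      by_contra hne'
      exact absurd (F.min'_le j (by simp [hF, hne'])) (not_le.mpr hj)
    refine ⟨i1, hprev, ?_⟩
    have e1 := hdom ((i1:ℕ) + 1)
    rw [pSum_succ, pSum_succ] at e1
    have e2 : pSum (T n) (i1:ℕ) = pSum (extremal r c n) (i1:ℕ) := by
      unfold pSum
      apply Finset.sum_congr rfl
      intro x hx
      simp only [Finset.mem_filter, Finset.mem_univ, true_and] at hx
      exact hprev x (by exact hx)
    have hle : T n i1 ≤ extremal r c n i1 := by linarith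
    have hne3 : T n i1 ≠ extremal r c n i1 := by
      have := F.min'_mem hFne
      simp only [hF, Finset.mem_filter, Finset.mem_univ, true_and] at this
      exact this
    exact lt_of_le_of_ne hle hne3


end FT
end
end
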